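/- arXiv:1402.2869 — 8 statements merged into one kernel-verified Lean document; each statement's English description precedes it below -/
import Mathlib

section
/- Cut optimality implies the minimax property: in a minimum spanning tree T* of a connected weighted graph G, for any two vertices k and l, the maximum edge cost along the unique path in T* from k to l equals the minimum over all paths w from k to l in G of the maximum edge cost along w. -/
/-- A minimum spanning tree of a weighted graph: a spanning tree (on the whole vertex
set) of minimum total edge cost among all spanning trees contained in `G`. -/
def IsMST {V : Type*} (G : SimpleGraph V) (c : Sym2 V → ℝ) (T : SimpleGraph V) : Prop :=
  T.IsTree ∧ T ≤ G ∧
    ∀ T' : SimpleGraph V, T'.IsTree → T' ≤ G →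
      (∑ᶠ e ∈ T.edgeSet, c e) ≤ ∑ᶠ e ∈ T'.edgeSet, c e

/-!
If `ab` is an edge of `G` and `e` lies on the tree path from `a` to `b`, exchanging `e` for
`ab` yields another spanning tree, so minimality gives `c e ≤ c ab` (the cycle property).
Along any walk `q` from `k` to `l` in `G`, the tree path from `k` to `l` is covered by the
tree paths between consecutive vertices of `q`, so each of its edges costs at most some
edge of `q`; and the tree path is itself a path of `G`.
-/

open SimpleGraph Walk

namespace SimpleGraph

variable {V : Type*} {T : SimpleGraph V} {a b : V} {e : Sym2 V} {p : T.Walk a b}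

theorem IsAcyclic.edges_subset_edges_of_isPath (hT : T.IsAcyclic) (hp : p.IsPath)
    (q : T.Walk a b) : p.edges ⊆ q.edges := by
  classical
  have hpq : p = q.bypass := congrArg Subtype.val <|
    (hT.subsingleton_path a b).elim ⟨p, hp⟩ ⟨q.bypass, q.bypass_isPath⟩
  exact hpq ▸ q.edges_bypass_subset_edges

theorem IsAcyclic.not_reachable_deleteEdges_of_mem_edges (hT : T.IsAcyclic) (hp : p.IsPath)
    (he : e ∈ p.edges) : ¬(T.deleteEdges {e}).Reachable a b := by
  induction e with | h u v
  rw [reachable_deleteEdges_iff_exists_walk]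
  rintro ⟨q, hq⟩
  exact hq (hT.edges_subset_edges_of_isPath hp q he)

theorem IsTree.sup_edge_deleteEdges_of_mem_edges (hT : T.IsTree) (hp : p.IsPath)
    (he : e ∈ p.edges) (hab : ¬T.Adj a b) : ((T ⊔ edge a b).deleteEdges {e}).IsTree := by
  have hne : a ≠ b := by
    rintro rfl
    simp [edges_eq_nil.mpr (isPath_iff_nil.mp hp)] at he
  constructor
  · have hba : (T ⊔ edge a b).Adj b a := Or.inr (by simp [edge_adj, hne.symm])
    have hcycle : (Walk.cons hba (p.mapLe le_sup_left)).IsCycle := by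
      rw [cons_isCycle_iff, edges_mapLe_eq_edges]
      exact ⟨hp.mapLe _, fun hmem => hab (p.adj_of_mem_edges hmem).symm⟩
    -- `e` lies on this cycle, so deleting it keeps `T ⊔ edge a b` connected.
    induction e with | h u v
    refine (hT.connected.mono le_sup_left).connected_delete_edge_of_not_isBridge fun hbr => ?_
    exact hbr.notMem_edges_of_isCycle hcycle (by simp [he])
  · have hT' : (T ⊔ edge a b).deleteEdges {e} = T.deleteEdges {e} ⊔ edge a b := by
      have heab : e ≠ s(a, b) := fun h => hab (p.adj_of_mem_edges (h ▸ he))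
      rw [deleteEdges_sup, (deleteEdges_eq_self (G := edge a b)).mpr]
      simpa [edgeSet_edge_of_ne hne] using heab.symm
    rw [hT']
    exact (hT.isAcyclic.anti (deleteEdges_le _)).sup_edge_of_not_reachable
      (hT.isAcyclic.not_reachable_deleteEdges_of_mem_edges hp he)

end SimpleGraph

section MinimumSpanningTree

variable {V : Type*} [Finite V] {G T : SimpleGraph V} {c : Sym2 V → ℝ}

theorem IsMST.cost_le_of_mem_edges_of_adj (hT : IsMST G c T) {a b : V} (hab : G.Adj a b)
    {p : T.Walk a b} (hp : p.IsPath) {e : Sym2 V} (he : e ∈ p.edges) : c e ≤ c s(a, b) := by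
  by_cases hTab : T.Adj a b
  · obtain rfl : e = s(a, b) := by
      simpa using hT.1.isAcyclic.edges_subset_edges_of_isPath hp hTab.toWalk he
    exact le_rfl
  set T' := (T ⊔ edge a b).deleteEdges {e}
  have hT'G : T' ≤ G := (deleteEdges_le _).trans (sup_le hT.2.1 (by simp [hab]))
  have hcost := hT.2.2 T' (hT.1.sup_edge_deleteEdges_of_mem_edges hp he hTab) hT'G
  have hE : T'.edgeSet = insert s(a, b) T.edgeSet \ {e} := by
    simp only [T', edgeSet_deleteEdges, edgeSet_sup, edgeSet_edge_of_ne hab.ne, Set.union_singleton]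
  have hsplit : ∑ᶠ f ∈ T'.edgeSet, c f + c e = c s(a, b) + ∑ᶠ f ∈ T.edgeSet, c f := by
    have he' : {e} ⊆ insert s(a, b) T.edgeSet :=
      Set.singleton_subset_iff.mpr (Or.inr (p.edges_subset_edgeSet he))
    rw [hE, add_comm, ← finsum_mem_singleton (f := c) (a := e),
      finsum_mem_add_sdiff he' (Set.toFinite _), finsum_mem_insert c hTab (Set.toFinite _)]
  linarith

theorem IsMST.exists_cost_le_of_mem_edges (hT : IsMST G c T) {k l : V} (q : G.Walk k l)
    {p : T.Walk k l} (hp : p.IsPath) {e : Sym2 V} (he : e ∈ p.edges) :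
    ∃ f ∈ q.edges, c e ≤ c f := by
  induction q with
  | nil => simp [edges_eq_nil.mpr (isPath_iff_nil.mp hp)] at he
  | @cons x y w hxy q ih =>
    obtain ⟨s, hs⟩ := hT.1.connected.exists_isPath x y
    obtain ⟨r, hr⟩ := hT.1.connected.exists_isPath y w
    have hcover := hT.1.isAcyclic.edges_subset_edges_of_isPath hp (s.append r) he
    rw [edges_append, List.mem_append] at hcover
    rcases hcover with hes | her
    · exact ⟨s(x, y), by simp, hT.cost_le_of_mem_edges_of_adj hxy hs hes⟩
    · obtain ⟨f, hf, hef⟩ := ih hr her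
      exact ⟨f, by simp [hf], hef⟩

end MinimumSpanningTree

theorem mst_path_minimax_general {V : Type*} [Fintype V] (G T : SimpleGraph V) (c : Sym2 V → ℝ)
    (hT : IsMST G c T) (k l : V)
    (p : T.Walk k l) (hp : p.IsPath) :
    IsLeast {m : WithBot ℝ | ∃ q : G.Walk k l, q.IsPath ∧ (q.edges.map c).maximum = m}
      ((p.edges.map c).maximum) := by
  refine ⟨⟨p.mapLe hT.2.1, hp.mapLe hT.2.1, by rw [edges_mapLe_eq_edges]⟩, ?_⟩
  rintro _ ⟨q, -, rfl⟩
  refine List.maximum_le_of_forall_le fun x hx => ?_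
  obtain ⟨e, he, rfl⟩ := List.mem_map.mp hx
  obtain ⟨f, hf, hef⟩ := hT.exists_cost_le_of_mem_edges q hp he
  exact (WithBot.coe_le_coe.mpr hef).trans (List.le_maximum_of_mem' (List.mem_map_of_mem hf))

/-- in a minimum spanning tree `T` of a connected weighted graph `G`, for any
two vertices `k`, `l`, the maximum edge cost along the (unique) path in `T` from `k` to `l`
equals the minimum, over all paths from `k` to `l` in `G`, of the maximum edge cost. -/
theorem mst_path_minimax {V : Type*} [Fintype V] (G T : SimpleGraph V) (c : Sym2 V → ℝ)
    (hG : G.Connected) (hT : IsMST G c T) (k l : V)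
    (p : T.Walk k l) (hp : p.IsPath) :
    IsLeast {m : WithBot ℝ | ∃ q : G.Walk k l, q.IsPath ∧ (q.edges.map c).maximum = m}
      ((p.edges.map c).maximum) :=
  mst_path_minimax_general G T c hT k l p hp
end

section
/- If a spanning tree T of a connected weighted graph satisfies the path optimality condition (for every non-tree edge (k,l), its cost is at least the cost of every edge on the unique tree path from k to l), then T is a minimum spanning tree. -/
theorem finsum_mem_insert_sdiff_singleton_add {α M : Type*} [AddCommMonoid M] {f : α → M}
    {s : Set α} {a b : α} (hs : s.Finite) (ha : a ∈ s) (hb : b ∉ s) :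
    ∑ᶠ i ∈ insert b (s \ {a}), f i + f a = ∑ᶠ i ∈ s, f i + f b := by
  rw [finsum_mem_insert f (fun h ↦ hb h.1) hs.sdiff,
    ← finsum_mem_add_sdiff (Set.singleton_subset_iff.mpr ha) hs, finsum_mem_singleton]
  abel

namespace SimpleGraph

variable {V : Type*} {G T T' : SimpleGraph V}

theorem Reachable.deleteEdges_reachable_or {u v a b : V} (hab : G.Reachable a b)
    (ha : (G.deleteEdges {s(u, v)}).Reachable u a ∨ (G.deleteEdges {s(u, v)}).Reachable v a) :
    (G.deleteEdges {s(u, v)}).Reachable u b ∨ (G.deleteEdges {s(u, v)}).Reachable v b := by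
  obtain ⟨p⟩ := hab
  induction p with
  | nil => exact ha
  | @cons a a' b hadj p ih =>
    refine ih ?_
    by_cases he : s(a, a') = s(u, v)
    · rcases Sym2.eq_iff.mp he with ⟨-, rfl⟩ | ⟨-, rfl⟩
      exacts [.inr .rfl, .inl .rfl]
    · have hadj' : (G.deleteEdges {s(u, v)}).Adj a a' := by simp [hadj, he]
      exact ha.imp (·.trans hadj'.reachable) (·.trans hadj'.reachable)

theorem Preconnected.deleteEdges_reachable_or (hG : G.Preconnected) (u v w : V) :
    (G.deleteEdges {s(u, v)}).Reachable u w ∨ (G.deleteEdges {s(u, v)}).Reachable v w :=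
  (hG u w).deleteEdges_reachable_or (.inl .rfl)

theorem IsTree.deleteEdges_sup_edge (hT : T.IsTree) {k l x y : V}
    (hx : (T.deleteEdges {s(k, l)}).Reachable k x)
    (hy : ¬(T.deleteEdges {s(k, l)}).Reachable k y) :
    (T.deleteEdges {s(k, l)} ⊔ edge x y).IsTree := by
  set H := T.deleteEdges {s(k, l)}
  have hsplit := hT.connected.preconnected.deleteEdges_reachable_or k l
  have hly : H.Reachable l y := (hsplit y).resolve_left hy
  have hxy : (H ⊔ edge x y).Reachable x y :=
    ((edge_adj x y x y).mpr ⟨.inl ⟨rfl, rfl⟩, fun h ↦ hy (h ▸ hx)⟩).reachable.mono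
      le_sup_right
  have hkl : (H ⊔ edge x y).Reachable k l :=
    (hx.mono le_sup_left).trans (hxy.trans (hly.mono le_sup_left).symm)
  have hk : ∀ w, (H ⊔ edge x y).Reachable k w := fun w ↦
    (hsplit w).elim (·.mono le_sup_left) fun h ↦ hkl.trans (h.mono le_sup_left)
  have hconn : (H ⊔ edge x y).Connected :=
    (connected_iff _).mpr ⟨fun u w ↦ (hk u).symm.trans (hk w), hT.connected.nonempty⟩
  exact ⟨hconn, (hT.isAcyclic.anti (deleteEdges_le _)).sup_edge_of_not_reachable
    fun h ↦ hy (hx.trans h)⟩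

def PathOptimal {R : Type*} [LE R] (G T : SimpleGraph V) (c : Sym2 V → R) : Prop :=
  ∀ k l : V, G.Adj k l → ¬ T.Adj k l →
    ∀ p : T.Walk k l, p.IsPath → ∀ e ∈ p.edges, c e ≤ c s(k, l)

theorem PathOptimal.exists_exchange {R : Type*} [AddCommMonoid R] [PartialOrder R]
    [IsOrderedCancelAddMonoid R] [Finite V] {c : Sym2 V → R} (hopt : G.PathOptimal T c)
    (hT : T.IsTree) (hTG : T ≤ G) (hT' : T'.IsTree) (hT'G : T' ≤ G) {k l : V}
    (hkl : T'.Adj k l) (hnkl : ¬T.Adj k l) :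
    ∃ T'' : SimpleGraph V, T''.IsTree ∧ T'' ≤ G ∧
      (∑ᶠ e ∈ T''.edgeSet, c e) ≤ ∑ᶠ e ∈ T'.edgeSet, c e ∧
      T''.edgeSet \ T.edgeSet = (T'.edgeSet \ T.edgeSet) \ {s(k, l)} := by
  set H := T'.deleteEdges {s(k, l)}
  obtain ⟨p, hp, -⟩ := hT.existsUnique_path k l
  have hl : ¬H.Reachable k l := isAcyclic_iff_forall_adj_isBridge.mp hT'.isAcyclic hkl
  obtain ⟨⟨⟨x, y⟩, hxy⟩, hd, hx, hy⟩ :=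
    p.exists_boundary_dart {w | H.Reachable k w} .rfl hl
  dsimp only [Set.mem_ofPred_eq] at hx hy hxy
  have hne : s(x, y) ≠ s(k, l) := fun h ↦ hnkl (show s(k, l) ∈ T.edgeSet from h ▸ hxy)
  have hxyT' : s(x, y) ∉ T'.edgeSet := fun h ↦
    hy (hx.trans (Adj.reachable (by simpa [H, hne] using h)))
  have hE : (H ⊔ edge x y).edgeSet = insert s(x, y) (T'.edgeSet \ {s(k, l)}) := by
    rw [edgeSet_sup, edgeSet_deleteEdges, edgeSet_edge_of_ne hxy.ne, Set.union_singleton]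
  refine ⟨H ⊔ edge x y, hT'.deleteEdges_sup_edge hx hy,
    sup_le ((deleteEdges_le _).trans hT'G) ((edge_le_iff G).mpr (.inr (hTG hxy))), ?_, ?_⟩
  · have hcost : c s(x, y) ≤ c s(k, l) :=
      hopt k l (hT'G hkl) hnkl p hp _ (List.mem_map_of_mem hd)
    have hsum := finsum_mem_insert_sdiff_singleton_add (f := c) (Set.toFinite _)
      (T'.mem_edgeSet.mpr hkl) hxyT'
    rw [hE]
    exact le_of_add_le_add_right (hsum.trans_le (add_le_add_right hcost _))
  · rw [hE, Set.insert_sdiff_of_mem _ (T.mem_edgeSet.mpr hxy), Set.sdiff_sdiff_comm]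

end SimpleGraph

open SimpleGraph

theorem path_optimality_implies_mst_general {V : Type*} [Fintype V]
    (G T : SimpleGraph V) (c : Sym2 V → ℝ)
    (hT : T.IsTree) (hTG : T ≤ G)
    (hopt : ∀ k l : V, G.Adj k l → ¬ T.Adj k l →
      ∀ p : T.Walk k l, p.IsPath → ∀ e ∈ p.edges, c e ≤ c s(k, l)) :
    IsMST G c T := by
  refine ⟨hT, hTG, fun T' hT' hT'G ↦ ?_⟩
  induction hn : (T'.edgeSet \ T.edgeSet).ncard generalizing T' with
  | zero =>
    have hle : T' ≤ T := by
      rwa [Set.ncard_eq_zero, Set.sdiff_eq_empty, edgeSet_subset_edgeSet] at hn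
    rw [(isTree_iff_maximal_isAcyclic.mp hT').2.eq_of_le hT.isAcyclic hle]
  | succ n ih =>
    obtain ⟨⟨k, l⟩, hkl, hnkl⟩ := Set.nonempty_of_ncard_ne_zero (hn.trans_ne n.succ_ne_zero)
    obtain ⟨T'', hT'', hT''G, hcost, hdiff⟩ :=
      (show G.PathOptimal T c from hopt).exists_exchange hT hTG hT' hT'G hkl hnkl
    have hkl' : s(k, l) ∈ T'.edgeSet \ T.edgeSet := ⟨hkl, hnkl⟩
    refine (ih T'' hT'' hT''G ?_).trans hcost
    rw [hdiff, Set.ncard_sdiff_singleton_of_mem hkl', hn, Nat.add_sub_cancel]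

/-- if a spanning tree `T` of a connected weighted graph `G` satisfies the
path optimality condition (every non-tree edge `(k,l)` of `G` costs at least as much as
every edge on the unique tree path from `k` to `l`), then `T` is a minimum spanning tree. -/
theorem path_optimality_implies_mst {V : Type*} [Fintype V]
    (G T : SimpleGraph V) (c : Sym2 V → ℝ)
    (hG : G.Connected) (hT : T.IsTree) (hTG : T ≤ G)
    (hopt : ∀ k l : V, G.Adj k l → ¬ T.Adj k l →
      ∀ p : T.Walk k l, p.IsPath → ∀ e ∈ p.edges, c e ≤ c s(k, l)) :
    IsMST G c T :=
  path_optimality_implies_mst_general G T c hT hTG hopt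
end

section
/- In any connected component t of a W-graph that is optimal (minimizing the sum of V_{ij} − V_i over its directed edges among all W-graphs with the same number of sinks), the sink s of t attains the minimum potential over all states in t: V_s = min_{i ∈ t} V_i. -/
open Finset

/-- A `W`-graph on the network `G` with sink set `W`: every non-sink state `i` has exactly
one outgoing arrow `i → next i` along an edge of `G`, sinks are encoded as fixed points of
`next`, and from every state some iterate of `next` reaches a sink (no cycles). -/
structure WGraph {V : Type*} (G : SimpleGraph V) (W : Finset V) where
  next : V → V
  adj_of_not_sink : ∀ i ∉ W, G.Adj i (next i)
  sink_fixed : ∀ i ∈ W, next i = i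
  absorbed : ∀ i : V, ∃ n : ℕ, next^[n] i ∈ W

/-- The cost `∑_{(i → j)} (V_{ij} - V_i)` of a `W`-graph, the sum running over its arrows. -/
def wcost {V : Type*} [Fintype V] [DecidableEq V] {G : SimpleGraph V} {W : Finset V}
    (Ve : Sym2 V → ℝ) (Vp : V → ℝ) (g : WGraph G W) : ℝ :=
  ∑ i ∈ Wᶜ, (Ve s(i, g.next i) - Vp i)

/-- The (undirected) edge set of the forest underlying a `W`-graph. -/
def wEdges {V : Type*} [Fintype V] [DecidableEq V] {G : SimpleGraph V} {W : Finset V}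
    (g : WGraph G W) : Finset (Sym2 V) :=
  Wᶜ.image fun i => s(i, g.next i)

/-- An optimal `W`-graph with `k` sinks: one minimizing the cost among all `W`-graphs
on `G` with `k` sinks. -/
def IsOptimalWGraph {V : Type*} [Fintype V] [DecidableEq V] (G : SimpleGraph V)
    (Ve : Sym2 V → ℝ) (Vp : V → ℝ) (k : ℕ) (W : Finset V) (g : WGraph G W) : Prop :=
  W.card = k ∧
    ∀ (W' : Finset V) (g' : WGraph G W'), W'.card = k →
      wcost Ve Vp g ≤ wcost Ve Vp g'

/-- Assumption 1 (genericness): all vertex potentials are distinct, all edge potentials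
(on edges of `G`) are distinct, and all differences `V_{ij} - V_k` are distinct. -/
def Generic {V : Type*} (G : SimpleGraph V) (Ve : Sym2 V → ℝ) (Vp : V → ℝ) : Prop :=
  Function.Injective Vp ∧
  (∀ e ∈ G.edgeSet, ∀ f ∈ G.edgeSet, Ve e = Ve f → e = f) ∧
  (∀ e ∈ G.edgeSet, ∀ f ∈ G.edgeSet, ∀ i j : V,
      Ve e - Vp i = Ve f - Vp j → e = f ∧ i = j)

/-!
Reversing the arrows along the path from `i` to its sink `s` yields a `W'`-graph with the same
number of sinks, `i` replacing `s`. Every edge of the forest survives, only with its direction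
flipped, so the edge potentials cancel and the cost changes by exactly `V_i - V_s`; optimality
forces this to be nonnegative. The reversal is built one arrow at a time, starting at the sink.
-/

open Finset

theorem Function.iterate_eq_of_forall_lt_eq {α : Type*} {f f' : α → α} {x : α} {n : ℕ}
    (h : ∀ m < n, f' (f^[m] x) = f (f^[m] x)) : f'^[n] x = f^[n] x := by
  induction n with
  | zero => rfl
  | succ n ih =>
    rw [Function.iterate_succ_apply', Function.iterate_succ_apply',
      ih fun m hm => h m (Nat.lt_succ_of_lt hm), h n n.lt_succ_self]

theorem Finset.card_insert_erase_of_notMem_of_mem {α : Type*} [DecidableEq α] {s : Finset α}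
    {a b : α} (ha : a ∉ s) (hb : b ∈ s) : (insert a (s.erase b)).card = s.card := by
  rw [card_insert_of_notMem fun h => ha (mem_of_mem_erase h), card_erase_add_one hb]

namespace WGraph

variable {V : Type*} {G : SimpleGraph V} {W : Finset V}

theorem iterate_eq_of_iterate_mem (g : WGraph G W) {v : V} {m m' : ℕ}
    (hm : g.next^[m] v ∈ W) (hmm' : m ≤ m') : g.next^[m'] v = g.next^[m] v := by
  obtain ⟨d, rfl⟩ := Nat.exists_eq_add_of_le hmm'
  rw [add_comm, Function.iterate_add_apply, Function.iterate_fixed (g.sink_fixed _ hm)]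

variable [DecidableEq V]

def moveSink (g : WGraph G W) {j s : V} (hj : j ∉ W) (hjs : g.next j = s) :
    WGraph G (insert j (W.erase s)) where
  next v := if v = s ∨ v = j then j else g.next v
  adj_of_not_sink v hv := by
    by_cases hvs : v = s
    · rw [if_pos (Or.inl hvs), hvs, ← hjs]
      exact (g.adj_of_not_sink j hj).symm
    · have hvj : v ≠ j := by rintro rfl; exact hv (mem_insert_self v _)
      rw [if_neg (by tauto)]
      exact g.adj_of_not_sink v fun hvW => hv (mem_insert_of_mem (mem_erase.2 ⟨hvs, hvW⟩))
  sink_fixed v hv := by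
    rcases mem_insert.1 hv with rfl | hv
    · simp
    · obtain ⟨hvs, hvW⟩ := mem_erase.1 hv
      have hvj : v ≠ j := by rintro rfl; exact hj hvW
      rw [if_neg (by tauto)]
      exact g.sink_fixed v hvW
  absorbed v := by
    obtain ⟨m, hm⟩ := g.absorbed v
    induction m generalizing v with
    | zero =>
      by_cases hv : v = s ∨ v = j
      · exact ⟨1, by simp [hv]⟩
      · exact ⟨0, mem_insert_of_mem (mem_erase.2 ⟨fun h => hv (Or.inl h), hm⟩)⟩
    | succ m ih =>
      by_cases hv : v = s ∨ v = j
      · exact ⟨1, by simp [hv]⟩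
      · obtain ⟨n, hn⟩ := ih (g.next v) (by rwa [Function.iterate_succ_apply] at hm)
        exact ⟨n + 1, by rwa [Function.iterate_succ_apply, if_neg hv]⟩

theorem moveSink_next_of_ne (g : WGraph G W) {j s : V} (hj : j ∉ W) (hjs : g.next j = s)
    {v : V} (hvs : v ≠ s) (hvj : v ≠ j) : (g.moveSink hj hjs).next v = g.next v :=
  if_neg (by tauto)

variable [Fintype V] (Ve : Sym2 V → ℝ) (Vp : V → ℝ)

theorem wcost_moveSink (g : WGraph G W) {j s : V} (hj : j ∉ W) (hjs : g.next j = s)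
    (hs : s ∈ W) : wcost Ve Vp (g.moveSink hj hjs) = wcost Ve Vp g + (Vp j - Vp s) := by
  have hsj : s ≠ j := by rintro rfl; exact hj hs
  have hcompl : (insert j (W.erase s))ᶜ = insert s (Wᶜ.erase j) := by
    rw [compl_insert, compl_erase, erase_insert_of_ne hsj]
  have hs' : s ∉ Wᶜ.erase j := fun h => mem_compl.1 (mem_of_mem_erase h) hs
  have hrest : ∀ v ∈ Wᶜ.erase j, (g.moveSink hj hjs).next v = g.next v := fun v hv =>
    moveSink_next_of_ne g hj hjs (by rintro rfl; exact hs' hv) (ne_of_mem_erase hv)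
  have hsnext : (g.moveSink hj hjs).next s = j := if_pos (Or.inl rfl)
  rw [wcost, wcost, hcompl, sum_insert hs', sum_congr rfl fun v hv => by rw [hrest v hv],
    ← add_sum_erase _ _ (mem_compl.2 hj), hsnext, hjs, Sym2.eq_swap]
  ring

theorem exists_wcost_eq_of_iterate_eq_sink (g : WGraph G W) {i s : V} (hs : s ∈ W) {n : ℕ}
    (hn : g.next^[n] i = s) :
    ∃ (W' : Finset V) (g' : WGraph G W'),
      W'.card = W.card ∧ wcost Ve Vp g' = wcost Ve Vp g + (Vp i - Vp s) := by
  induction n generalizing W s with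
  | zero => exact ⟨W, g, rfl, by simp [← hn]⟩
  | succ n ih =>
    rw [Function.iterate_succ_apply'] at hn
    set j := g.next^[n] i with hj_def
    by_cases hj : j ∈ W
    · exact ih g hs ((g.sink_fixed j hj).symm.trans hn)
    -- From `s` or `j` the path would be stuck at `s` by step `n`, contradicting `j ∉ W`.
    have havoid : ∀ m < n, g.next^[m] i ≠ s ∧ g.next^[m] i ≠ j := by
      refine fun m hm => not_or.1 fun hm' => hj ?_
      have hsucc : g.next^[m + 1] i = s := by
        rw [Function.iterate_succ_apply']
        rcases hm' with h | h <;> rw [h]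
        exacts [g.sink_fixed s hs, hn]
      rw [hj_def, g.iterate_eq_of_iterate_mem (hsucc ▸ hs) hm, hsucc]
      exact hs
    have hpath : (g.moveSink hj hn).next^[n] i = j :=
      Function.iterate_eq_of_forall_lt_eq fun m hm =>
        moveSink_next_of_ne g hj hn (havoid m hm).1 (havoid m hm).2
    obtain ⟨W', g', hcard, hcost⟩ := ih (g.moveSink hj hn) (mem_insert_self j _) hpath
    refine ⟨W', g', hcard.trans (card_insert_erase_of_notMem_of_mem hj hs), ?_⟩
    rw [hcost, wcost_moveSink Ve Vp g hj hn hs]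
    ring

end WGraph

theorem optimal_wgraph_sink_min_potential_general {V : Type*} [Fintype V] [DecidableEq V]
    (G : SimpleGraph V) (Ve : Sym2 V → ℝ) (Vp : V → ℝ)
    (k : ℕ) (W : Finset V) (g : WGraph G W)
    (hopt : IsOptimalWGraph G Ve Vp k W g)
    (s : V) (hs : s ∈ W) (i : V) (hi : ∃ n : ℕ, g.next^[n] i = s) :
    Vp s ≤ Vp i := by
  obtain ⟨n, hn⟩ := hi
  obtain ⟨W', g', hcard, hcost⟩ := g.exists_wcost_eq_of_iterate_eq_sink Ve Vp hs hn
  have := hopt.2 W' g' (hcard.trans hopt.1)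
  linarith

/-- in any connected component of an optimal `W`-graph, the sink of that
component attains the minimal potential over all states of the component. -/
theorem optimal_wgraph_sink_min_potential {V : Type*} [Fintype V] [DecidableEq V]
    (G : SimpleGraph V) (hG : G.Connected) (Ve : Sym2 V → ℝ) (Vp : V → ℝ)
    (hgen : Generic G Ve Vp) (k : ℕ) (W : Finset V) (g : WGraph G W)
    (hopt : IsOptimalWGraph G Ve Vp k W g)
    (s : V) (hs : s ∈ W) (i : V) (hi : ∃ n : ℕ, g.next^[n] i = s) :
    Vp s ≤ Vp i :=
  optimal_wgraph_sink_min_potential_general G Ve Vp k W g hopt s hs i hi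
end

section
/- Under the genericness assumption, every optimal W-graph g*_k is a subgraph (as an undirected graph) of the unique minimum spanning tree T* of the network with edge costs c_{ij} = V_{ij}. -/
/-!
Suppose the arrow `i → j` of an optimal `W`-graph `g` is not an edge of the minimum spanning
tree `T`. The basin `A` of `i` (the states whose trajectory passes through `i`) contains `i` but
not `j`, so the `T`-path from `i` to `j` leaves `A` along some tree edge `uv`, `u ∈ A`, `v ∉ A`.
Exchanging `uv` for `ij` gives another spanning tree, so `V_{uv} < V_{ij}` by minimality and
genericity. Reversing the arrows of `g` on the path `u → ⋯ → i`, dropping `i → j` and adding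
`u → v` gives a `W`-graph whose cost is lower by `V_{ij} - V_{uv}`, contradicting optimality.
-/

open Finset

namespace SimpleGraph

variable {V : Type*} {G T H : SimpleGraph V} {a b u v : V}

theorem Reachable.of_forall_adj {x y : V} (h : ∀ ⦃x y⦄, G.Adj x y → H.Reachable x y)
    (hxy : G.Reachable x y) : H.Reachable x y := by
  rw [reachable_eq_reflTransGen] at hxy
  induction hxy with
  | refl => rfl
  | tail _ hcd ih => exact ih.trans (h hcd)

theorem Walk.IsTrail.exists_boundary_edge {i j : V} {w : G.Walk i j} (hw : w.IsTrail)
    {A : Set V} (hi : i ∈ A) (hj : j ∉ A) :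
    ∃ u v, u ∈ A ∧ v ∉ A ∧ G.Adj u v ∧ s(u, v) ∈ w.edges ∧
      (G.deleteEdges {s(u, v)}).Reachable i u ∧ (G.deleteEdges {s(u, v)}).Reachable v j := by
  induction w with
  | nil => exact absurd hi hj
  | @cons a b c hab w ih =>
    rw [Walk.isTrail_cons] at hw
    by_cases hb : b ∈ A
    · obtain ⟨u, v, hu, hv, huv, hmem, hbu, hvc⟩ := ih hw.1 hb hj
      have hab' : (G.deleteEdges {s(u, v)}).Adj a b :=
        (deleteEdges_adj ..).2 ⟨hab, fun h => hw.2 (Set.mem_singleton_iff.1 h ▸ hmem)⟩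
      exact ⟨u, v, hu, hv, huv, by simp [hmem], hab'.reachable.trans hbu, hvc⟩
    · exact ⟨a, b, hi, hb, hab, by simp, .rfl,
        ⟨w.toDeleteEdges {s(a, b)} fun e he h => hw.2 (Set.mem_singleton_iff.1 h ▸ he)⟩⟩

theorem finsum_edgeSet_sup_edge [Finite V] (c : Sym2 V → ℝ) (hab : a ≠ b) (h : ¬ H.Adj a b) :
    ∑ᶠ e ∈ (H ⊔ edge a b).edgeSet, c e = c s(a, b) + ∑ᶠ e ∈ H.edgeSet, c e := by
  rw [edgeSet_sup, edgeSet_edge_of_ne hab, Set.union_singleton,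
    finsum_mem_insert c h (Set.toFinite _)]

theorem deleteEdges_sup_edge_of_adj (huv : T.Adj u v) :
    T.deleteEdges {s(u, v)} ⊔ edge u v = T := by
  ext x y
  simp only [sup_adj, deleteEdges_adj, edge_adj, Set.mem_singleton_iff, Sym2.eq_iff]
  constructor
  · rintro (⟨h, -⟩ | ⟨⟨rfl, rfl⟩ | ⟨rfl, rfl⟩, -⟩)
    exacts [h, huv, huv.symm]
  · intro h
    by_cases hxy : x = u ∧ y = v ∨ x = v ∧ y = u
    · exact Or.inr ⟨hxy, h.ne⟩
    · exact Or.inl ⟨h, hxy⟩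

theorem IsAcyclic.not_reachable_deleteEdges (hT : T.IsAcyclic) (huv : T.Adj u v)
    (hau : (T.deleteEdges {s(u, v)}).Reachable a u)
    (hvb : (T.deleteEdges {s(u, v)}).Reachable v b) :
    ¬ (T.deleteEdges {s(u, v)}).Reachable a b := fun hab =>
  isAcyclic_iff_forall_adj_isBridge.mp hT huv (hau.symm.trans (hab.trans hvb.symm))

theorem IsTree.deleteEdges_sup_edge_s11 (hT : T.IsTree) (huv : T.Adj u v)
    (hau : (T.deleteEdges {s(u, v)}).Reachable a u)
    (hvb : (T.deleteEdges {s(u, v)}).Reachable v b) :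
    (T.deleteEdges {s(u, v)} ⊔ edge a b).IsTree := by
  set H := T.deleteEdges {s(u, v)}
  have hab := hT.isAcyclic.not_reachable_deleteEdges huv hau hvb
  refine ⟨?_, (hT.isAcyclic.anti (deleteEdges_le _)).sup_edge_of_not_reachable hab⟩
  have : Nonempty V := hT.connected.nonempty
  have hle : H ≤ H ⊔ edge a b := le_sup_left
  refine ⟨fun x y => (hT.connected.preconnected x y).of_forall_adj fun x y hxy => ?_⟩
  by_cases he : s(x, y) = s(u, v)
  · have hab' : (H ⊔ edge a b).Adj a b :=
      Or.inr ((edge_adj ..).2 ⟨Or.inl ⟨rfl, rfl⟩, fun h => hab (h ▸ .rfl)⟩)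
    have hreach : (H ⊔ edge a b).Reachable u v :=
      (hau.mono hle).symm.trans (hab'.reachable.trans (hvb.mono hle).symm)
    rcases Sym2.eq_iff.1 he with ⟨rfl, rfl⟩ | ⟨rfl, rfl⟩
    exacts [hreach, hreach.symm]
  · exact (Adj.reachable ((deleteEdges_adj ..).2 ⟨hxy, he⟩)).mono hle

end SimpleGraph

open SimpleGraph

theorem IsMST.cost_le_of_reachable_deleteEdges {V : Type*} [Finite V] {G T : SimpleGraph V}
    {c : Sym2 V → ℝ} (hT : IsMST G c T) {a b u v : V} (hab : G.Adj a b) (huv : T.Adj u v)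
    (hau : (T.deleteEdges {s(u, v)}).Reachable a u)
    (hvb : (T.deleteEdges {s(u, v)}).Reachable v b) :
    c s(u, v) ≤ c s(a, b) := by
  obtain ⟨hTtree, hTG, hmin⟩ := hT
  have hsep := hTtree.isAcyclic.not_reachable_deleteEdges huv hau hvb
  have hle := hmin _ (hTtree.deleteEdges_sup_edge_s11 huv hau hvb)
    (sup_le ((deleteEdges_le _).trans hTG) ((edge_le_iff _).2 (Or.inr hab)))
  rw [finsum_edgeSet_sup_edge c (by rintro rfl; exact hsep .rfl) fun h => hsep h.reachable]
    at hle
  conv_lhs at hle => rw [← deleteEdges_sup_edge_of_adj huv]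
  rw [finsum_edgeSet_sup_edge c huv.ne (by simp)] at hle
  linarith

theorem Function.iterate_update_of_forall_iterate_ne {α : Type*} [DecidableEq α] {f : α → α}
    {x y z : α} (h : ∀ n, f^[n] z ≠ x) (n : ℕ) :
    (Function.update f x y)^[n] z = f^[n] z := by
  induction n generalizing z with
  | zero => rfl
  | succ n ih =>
    rw [Function.iterate_succ_apply, Function.iterate_succ_apply,
      Function.update_of_ne (show z ≠ x from h 0),
      ih fun m => by rw [← Function.iterate_succ_apply]; exact h _]

namespace WGraph

variable {V : Type*} {G : SimpleGraph V} {W : Finset V} (g : WGraph G W)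

def Reaches (x y : V) : Prop := ∃ n, g.next^[n] x = y

variable {g}

theorem Reaches.trans {x y z : V} (hxy : g.Reaches x y) (hyz : g.Reaches y z) :
    g.Reaches x z := by
  obtain ⟨m, rfl⟩ := hxy
  obtain ⟨n, rfl⟩ := hyz
  exact ⟨n + m, Function.iterate_add_apply ..⟩

theorem iterate_eq_self_of_mem {x : V} (hx : x ∈ W) (n : ℕ) : g.next^[n] x = x :=
  Function.iterate_fixed (g.sink_fixed x hx) n

theorem notMem_of_reaches {x y : V} (hxy : g.Reaches x y) (hy : y ∉ W) : x ∉ W := by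
  obtain ⟨n, rfl⟩ := hxy
  intro hx
  exact hy ((iterate_eq_self_of_mem hx n).symm ▸ hx)

theorem not_reaches_next_self {x : V} (hx : x ∉ W) : ¬ g.Reaches (g.next x) x := by
  rintro ⟨n, hn⟩
  have hper : Function.IsPeriodicPt g.next (n + 1) x := by
    rw [Function.IsPeriodicPt, Function.IsFixedPt, Function.iterate_succ_apply, hn]
  obtain ⟨m, hm⟩ := g.absorbed x
  obtain ⟨s, hs⟩ : ∃ s, (n + 1) * m = s + m := ⟨n * m, by ring⟩
  have hret : g.next^[(n + 1) * m] x = x := hper.mul_const m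
  rw [hs, Function.iterate_add_apply, iterate_eq_self_of_mem hm] at hret
  exact hx (hret ▸ hm)

variable [DecidableEq V]

def redirect {x y : V} (hx : x ∉ W) (hxy : G.Adj x y) (hy : ¬ g.Reaches y x) : WGraph G W where
  next := Function.update g.next x y
  adj_of_not_sink i hi := by
    by_cases hix : i = x
    · subst hix; simpa using hxy
    · simpa [hix] using g.adj_of_not_sink i hi
  sink_fixed i hi := by
    rw [Function.update_of_ne (ne_of_mem_of_not_mem hi hx)]
    exact g.sink_fixed i hi
  absorbed z := by
    obtain ⟨m, hm⟩ := g.absorbed y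
    obtain ⟨n, hn⟩ := g.absorbed z
    induction n generalizing z with
    | zero => exact ⟨0, hn⟩
    | succ n ih =>
      by_cases hzx : z = x
      · subst hzx
        refine ⟨m + 1, ?_⟩
        rwa [Function.iterate_succ_apply, Function.update_self,
          Function.iterate_update_of_forall_iterate_ne (not_exists.1 hy)]
      · obtain ⟨k, hk⟩ := ih (g.next z) (by rwa [← Function.iterate_succ_apply])
        exact ⟨k + 1, by rwa [Function.iterate_succ_apply, Function.update_of_ne hzx]⟩

section redirect

variable {x y : V} (hx : x ∉ W) (hxy : G.Adj x y) (hy : ¬ g.Reaches y x)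

theorem redirect_next : (g.redirect hx hxy hy).next = Function.update g.next x y := rfl

theorem redirect_iterate_of_not_reaches {z : V} (hz : ¬ g.Reaches z x) (n : ℕ) :
    (g.redirect hx hxy hy).next^[n] z = g.next^[n] z :=
  Function.iterate_update_of_forall_iterate_ne (not_exists.1 hz) n

theorem wcost_redirect [Fintype V] (Ve : Sym2 V → ℝ) (Vp : V → ℝ) :
    wcost Ve Vp (g.redirect hx hxy hy) = wcost Ve Vp g - Ve s(x, g.next x) + Ve s(x, y) := by
  have hxc : x ∈ Wᶜ := mem_compl.2 hx
  rw [wcost, wcost, ← add_sum_erase _ _ hxc, ← add_sum_erase _ _ hxc, redirect_next,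
    Function.update_self, sum_congr rfl fun i hi => by
      rw [Function.update_of_ne (ne_of_mem_erase hi)]]
  ring

end redirect

/-- Reverse the arrows on the path `u → ⋯ → i` and add the arrow `u → v`; by induction on the
length of the path, one `redirect` per arrow, starting at `u`. -/
theorem exists_wcost_eq_of_reaches [Fintype V] (Ve : Sym2 V → ℝ) (Vp : V → ℝ) {i u v : V}
    (hi : i ∉ W) (hui : g.Reaches u i) (hvi : ¬ g.Reaches v i) (huv : G.Adj u v) :
    ∃ g' : WGraph G W, wcost Ve Vp g' = wcost Ve Vp g - Ve s(i, g.next i) + Ve s(u, v) := by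
  obtain ⟨N, hN⟩ := hui
  induction N generalizing g u v with
  | zero =>
    obtain rfl : u = i := hN
    exact ⟨g.redirect hi huv hvi, wcost_redirect ..⟩
  | succ N ih =>
    have hu : u ∉ W := g.notMem_of_reaches ⟨N + 1, hN⟩ hi
    have hvu : ¬ g.Reaches v u := fun h => hvi (h.trans ⟨N + 1, hN⟩)
    have hnext : ¬ g.Reaches (g.next u) u := g.not_reaches_next_self hu
    have hN' : g.next^[N] (g.next u) = i := by rwa [← Function.iterate_succ_apply]
    have hui : u ≠ i := by rintro rfl; exact hnext ⟨N, hN'⟩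
    have hvi₁ : ¬ (g.redirect hu huv hvu).Reaches u i := by
      rintro ⟨_ | n, hn⟩
      · exact hui hn
      · rw [Function.iterate_succ_apply, redirect_next, Function.update_self,
          ← redirect_next hu huv hvu, redirect_iterate_of_not_reaches hu huv hvu hvu] at hn
        exact hvi ⟨n, hn⟩
    obtain ⟨g', hg'⟩ := ih (g := g.redirect hu huv hvu) hvi₁ (g.adj_of_not_sink u hu).symm
      (by rwa [redirect_iterate_of_not_reaches hu huv hvu hnext])
    refine ⟨g', ?_⟩
    rw [hg', wcost_redirect, redirect_next, Function.update_of_ne hui.symm,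
      Sym2.eq_swap (a := g.next u)]
    ring

end WGraph

theorem optimal_wgraph_subgraph_of_mst_general {V : Type*} [Fintype V] [DecidableEq V]
    (G : SimpleGraph V) (Ve : Sym2 V → ℝ) (Vp : V → ℝ)
    (hgen : Generic G Ve Vp)
    (T : SimpleGraph V) (hT : IsMST G Ve T)
    (k : ℕ) (W : Finset V) (g : WGraph G W)
    (hopt : IsOptimalWGraph G Ve Vp k W g) :
    ∀ i ∉ W, T.Adj i (g.next i) := by
  intro i hi
  by_contra hTi
  have hij : G.Adj i (g.next i) := g.adj_of_not_sink i hi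
  obtain ⟨p⟩ := hT.1.connected.preconnected i (g.next i)
  obtain ⟨u, v, hu, hv, huv, -, hiu, hvj⟩ := p.bypass_isPath.isTrail.exists_boundary_edge
    (A := {x | g.Reaches x i}) ⟨0, rfl⟩ (g.not_reaches_next_self hi)
  have hle : Ve s(u, v) ≤ Ve s(i, g.next i) := hT.cost_le_of_reachable_deleteEdges hij huv hiu hvj
  have hne : Ve s(u, v) ≠ Ve s(i, g.next i) := fun h =>
    hTi (hgen.2.1 _ (hT.2.1 huv) _ hij h ▸ huv : s(i, g.next i) ∈ T.edgeSet)
  obtain ⟨g', hg'⟩ := g.exists_wcost_eq_of_reaches Ve Vp hi hu hv (hT.2.1 huv)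
  linarith [hopt.2 W g' hopt.1, lt_of_le_of_ne hle hne]

/-- under the genericness assumption, every optimal `W`-graph is, as an
undirected graph, a subgraph of the unique minimum spanning tree `T` of the network with
edge costs `c_{ij} = V_{ij}`. -/
theorem optimal_wgraph_subgraph_of_mst {V : Type*} [Fintype V] [DecidableEq V]
    (G : SimpleGraph V) (hG : G.Connected) (Ve : Sym2 V → ℝ) (Vp : V → ℝ)
    (hgen : Generic G Ve Vp)
    (T : SimpleGraph V) (hT : IsMST G Ve T)
    (k : ℕ) (W : Finset V) (g : WGraph G W)
    (hopt : IsOptimalWGraph G Ve Vp k W g) :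
    ∀ i ∉ W, T.Adj i (g.next i) :=
  optimal_wgraph_subgraph_of_mst_general G Ve Vp hgen T hT k W g hopt
end

section
/- Under the genericness assumption, the optimal W-graphs are nested: the sink set of the optimal W-graph with k sinks is contained in the sink set of the optimal W-graph with k+1 sinks, and the edge set of the optimal forest with k+1 sinks is contained in the edge set of the optimal forest with k sinks, for k = 1, ..., n−1. -/
open Finset

set_option linter.unusedVariables false
set_option linter.unusedSectionVars false

namespace WGraph

variable {V : Type*} [DecidableEq V] {G : SimpleGraph V} {W : Finset V}

/-- first hitting time of the sink set -/
def hit (g : WGraph G W) (x : V) : ℕ := Nat.find (g.absorbed x)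

/-- the sink eventually reached from `x` -/
def sink (g : WGraph G W) (x : V) : V := g.next^[g.hit x] x

lemma sink_mem (g : WGraph G W) (x : V) : g.sink x ∈ W := Nat.find_spec (g.absorbed x)

lemma not_mem_of_lt_hit (g : WGraph G W) {x : V} {m : ℕ} (h : m < g.hit x) :
    g.next^[m] x ∉ W := Nat.find_min (g.absorbed x) h

lemma hit_le (g : WGraph G W) {x : V} {n : ℕ} (h : g.next^[n] x ∈ W) : g.hit x ≤ n :=
  Nat.find_le h

lemma iterate_of_hit_le (g : WGraph G W) {x : V} {n : ℕ} (h : g.hit x ≤ n) :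
    g.next^[n] x = g.sink x := by
  obtain ⟨t, rfl⟩ := Nat.exists_eq_add_of_le h
  induction t with
  | zero => rfl
  | succ t ih =>
    have h2 : g.hit x + (t + 1) = 1 + (g.hit x + t) := by omega
    rw [h2, Function.iterate_add_apply, ih (by omega), Function.iterate_one]
    exact g.sink_fixed _ (g.sink_mem x)

lemma hit_eq_zero (g : WGraph G W) {x : V} (h : x ∈ W) : g.hit x = 0 :=
  Nat.le_zero.mp (g.hit_le (by simpa using h))

lemma sink_of_mem (g : WGraph G W) {x : V} (h : x ∈ W) : g.sink x = x := by
  rw [sink, g.hit_eq_zero h, Function.iterate_zero_apply]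

lemma sink_iterate (g : WGraph G W) (x : V) (n : ℕ) :
    g.sink (g.next^[n] x) = g.sink x := by
  have h1 : g.sink (g.next^[n] x) = g.next^[g.hit (g.next^[n] x) + n] x := by
    rw [sink, Function.iterate_add_apply]
  have h2 : g.next^[g.hit (g.next^[n] x) + n] x ∈ W := by
    rw [← h1]; exact g.sink_mem _
  rw [h1, g.iterate_of_hit_le (g.hit_le h2)]

lemma sink_next (g : WGraph G W) (x : V) : g.sink (g.next x) = g.sink x := by
  simpa using g.sink_iterate x 1

lemma sink_eq_self_iff (g : WGraph G W) {x : V} : g.sink x = x ↔ x ∈ W := by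
  constructor
  · intro h; rw [← h]; exact g.sink_mem x
  · exact g.sink_of_mem

lemma hit_next_lt (g : WGraph G W) {x : V} (h : x ∉ W) : g.hit (g.next x) < g.hit x := by
  have h1 : 1 ≤ g.hit x := by
    rcases Nat.eq_zero_or_pos (g.hit x) with h0 | h0
    · exfalso; apply h
      have := g.sink_mem x; rwa [sink, h0, Function.iterate_zero_apply] at this
    · exact h0
  have h2 : g.next^[g.hit x - 1] (g.next x) ∈ W := by
    rw [← Function.iterate_succ_apply]
    have h3 : (g.hit x - 1).succ = g.hit x := by omega
    rw [h3]; exact g.sink_mem x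
  have := g.hit_le h2
  omega

/-- points on the orbit before absorption are pairwise distinct -/
lemma iterate_ne (g : WGraph G W) {x : V} {a b : ℕ} (hab : a < b) (hb : b ≤ g.hit x) :
    g.next^[a] x ≠ g.next^[b] x := by
  intro he
  -- periodicity: ∀ t ≥ a, value recurs at an index < b
  have key : ∀ t, a ≤ t → ∃ t', a ≤ t' ∧ t' < b ∧ g.next^[t] x = g.next^[t'] x := by
    intro t
    induction t using Nat.strong_induction_on with
    | _ t ih =>
      intro hat
      by_cases htb : t < b
      · exact ⟨t, hat, htb, rfl⟩
      · have hged : t - (b - a) < t := by omega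
        have hge : a ≤ t - (b - a) := by omega
        have hval : g.next^[t] x = g.next^[t - (b - a)] x := by
          have : t = (t - b) + b := by omega
          rw [this, Function.iterate_add_apply, ← he, ← Function.iterate_add_apply]
          congr 1; omega
        obtain ⟨t', h1, h2, h3⟩ := ih _ hged hge
        exact ⟨t', h1, h2, hval.trans h3⟩
  obtain ⟨t', _, h2, h3⟩ := key (g.hit x) (by omega)
  have : g.next^[t'] x ∈ W := by
    rw [← h3, g.iterate_of_hit_le le_rfl]; exact g.sink_mem x
  exact g.not_mem_of_lt_hit (by omega) this

lemma no_return (g : WGraph G W) {x : V} (hx : x ∉ W) {m : ℕ} (hm : 0 < m)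
    (h : g.next^[m] x = x) : False := by
  have hall : ∀ s, g.next^[s * m] x = x := by
    intro s; induction s with
    | zero => simp
    | succ s ih => rw [Nat.succ_mul, Function.iterate_add_apply, h, ih]
  have h1 : g.hit x ≤ g.hit x * m := Nat.le_mul_of_pos_right _ hm
  have := g.iterate_of_hit_le h1
  rw [hall] at this
  exact hx (this ▸ g.sink_mem x)

lemma next_ne (g : WGraph G W) {x : V} (hx : x ∉ W) : g.next x ≠ x := by
  intro h; exact g.no_return hx (m := 1) one_pos (by simpa using h)

/-- the map `i ↦ s(i, next i)` is injective on non-sinks -/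
lemma edge_inj (g : WGraph G W) {i j : V} (hi : i ∉ W) (hj : j ∉ W)
    (h : s(i, g.next i) = s(j, g.next j)) : i = j := by
  rw [Sym2.eq_iff] at h
  rcases h with ⟨h1, _⟩ | ⟨h1, h2⟩
  · exact h1
  · exfalso
    apply g.no_return hi (m := 2) (by omega)
    show g.next (g.next i) = i
    rw [h2, h1]

end WGraph

namespace WGraph

variable {V : Type*} [Fintype V] [DecidableEq V] {G : SimpleGraph V} {W : Finset V}

lemma wcost_eq_edges (Ve : Sym2 V → ℝ) (Vp : V → ℝ) (g : WGraph G W) :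
    wcost Ve Vp g = (∑ e ∈ wEdges g, Ve e) - ∑ i ∈ Wᶜ, Vp i := by
  rw [wcost, Finset.sum_sub_distrib]
  congr 1
  rw [wEdges, Finset.sum_image]
  intro i hi j hj h
  exact g.edge_inj (by simpa using hi) (by simpa using hj) h

/-- transport a W-graph along an equality of sink sets -/
def copy (g : WGraph G W) {W' : Finset V} (h : W = W') : WGraph G W' := h ▸ g

@[simp] lemma copy_next (g : WGraph G W) {W' : Finset V} (h : W = W') :
    (g.copy h).next = g.next := by subst h; rfl

lemma wcost_copy (Ve : Sym2 V → ℝ) (Vp : V → ℝ) (g : WGraph G W) {W' : Finset V}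
    (h : W = W') : wcost Ve Vp (g.copy h) = wcost Ve Vp g := by subst h; rfl

lemma wEdges_copy (g : WGraph G W) {W' : Finset V} (h : W = W') :
    wEdges (g.copy h) = wEdges g := by subst h; rfl

lemma mem_wEdges (g : WGraph G W) {i : V} (hi : i ∉ W) : s(i, g.next i) ∈ wEdges g :=
  Finset.mem_image.mpr ⟨i, by simpa using hi, rfl⟩

/-! ### Deleting an arrow: the tail becomes a new sink -/

def delete (g : WGraph G W) (x : V) (hx : x ∉ W) : WGraph G (insert x W) where
  next := Function.update g.next x x
  adj_of_not_sink := by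
    intro i hi
    rw [Finset.mem_insert, not_or] at hi
    rw [Function.update_of_ne hi.1]
    exact g.adj_of_not_sink i hi.2
  sink_fixed := by
    intro i hi
    rcases Finset.mem_insert.mp hi with rfl | hiW
    · simp
    · rw [Function.update_of_ne (by rintro rfl; exact hx hiW)]
      exact g.sink_fixed i hiW
  absorbed := by
    intro i
    suffices H : ∀ N i, g.hit i ≤ N → ∃ n, (Function.update g.next x x)^[n] i ∈ insert x W by
      exact H (g.hit i) i le_rfl
    intro N
    induction N with
    | zero =>
      intro i hi
      refine ⟨0, ?_⟩
      have : g.sink i = i := by rw [sink, Nat.le_zero.mp hi, Function.iterate_zero_apply]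
      simp [Finset.mem_insert, (g.sink_eq_self_iff).mp this]
    | succ N ih =>
      intro i hi
      by_cases hix : i = x
      · exact ⟨0, by simp [hix]⟩
      by_cases hiW : i ∈ W
      · exact ⟨0, by simp [hiW]⟩
      · obtain ⟨n, hn⟩ := ih (g.next i) (by have := g.hit_next_lt hiW; omega)
        refine ⟨n + 1, ?_⟩
        rw [Function.iterate_succ_apply, Function.update_of_ne hix]
        exact hn

lemma delete_iterate (g : WGraph G W) {x : V} (hx : x ∉ W) {x₀ : V} {n : ℕ}
    (h : ∀ j, j < n → g.next^[j] x₀ ≠ x) :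
    (g.delete x hx).next^[n] x₀ = g.next^[n] x₀ := by
  induction n with
  | zero => rfl
  | succ n ih =>
    rw [Function.iterate_succ_apply', Function.iterate_succ_apply',
      ih (fun j hj => h j (by omega))]
    show Function.update g.next x x _ = _
    rw [Function.update_of_ne (h n (by omega))]

/-- if the orbit of `x₀` ever reaches `x`, then in the deleted graph `x₀` is absorbed at `x` -/
lemma sink_delete_of_hits (g : WGraph G W) {x : V} (hx : x ∉ W) {x₀ : V}
    (h : ∃ t, g.next^[t] x₀ = x) : (g.delete x hx).sink x₀ = x := by
  classical
  have hmin := Nat.find_spec h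
  set t₀ := Nat.find h with ht₀
  have hag : (g.delete x hx).next^[t₀] x₀ = x := by
    rw [delete_iterate g hx (fun j hj => Nat.find_min h hj)]; exact hmin
  have := (g.delete x hx).sink_iterate x₀ t₀
  rw [hag, (g.delete x hx).sink_of_mem (Finset.mem_insert_self x W)] at this
  exact this.symm

/-- if the orbit of `x₀` never reaches `x`, the sink is unchanged after deletion -/
lemma sink_delete_of_avoids (g : WGraph G W) {x : V} (hx : x ∉ W) {x₀ : V}
    (h : ∀ t, g.next^[t] x₀ ≠ x) : (g.delete x hx).sink x₀ = g.sink x₀ := by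
  have hag : (g.delete x hx).next^[g.hit x₀] x₀ = g.sink x₀ :=
    (delete_iterate g hx (fun j _ => h j)).trans rfl
  have := (g.delete x hx).sink_iterate x₀ (g.hit x₀)
  rw [hag, (g.delete x hx).sink_of_mem (Finset.mem_insert_of_mem (g.sink_mem x₀))] at this
  exact this.symm

/-- orbit avoidance: it suffices to avoid up to the hitting time, provided the target is
not a sink -/
lemma avoids_of_avoids_le_hit (g : WGraph G W) {x x₀ : V} (hx : x ∉ W)
    (h : ∀ t, t ≤ g.hit x₀ → g.next^[t] x₀ ≠ x) : ∀ t, g.next^[t] x₀ ≠ x := by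
  intro t
  by_cases ht : t ≤ g.hit x₀
  · exact h t ht
  · rw [g.iterate_of_hit_le (by omega)]
    intro hc; exact hx (hc ▸ g.sink_mem x₀)

lemma wcost_delete (Ve : Sym2 V → ℝ) (Vp : V → ℝ) (g : WGraph G W) {x : V} (hx : x ∉ W) :
    wcost Ve Vp (g.delete x hx) = wcost Ve Vp g - (Ve s(x, g.next x) - Vp x) := by
  have hnext : (g.delete x hx).next = Function.update g.next x x := rfl
  rw [wcost, wcost, hnext, Finset.compl_insert]
  rw [Finset.sum_congr rfl (g := fun i => Ve s(i, g.next i) - Vp i) (fun i hi => by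
    rw [Function.update_of_ne (Finset.ne_of_mem_erase hi)])]
  rw [Finset.sum_erase_eq_sub (by simpa using hx)]

/-! ### Attaching a sink to another component -/

def attach (g : WGraph G W) (u v : V) (hu : u ∈ W) (hadj : G.Adj u v)
    (hv : g.sink v ≠ u) : WGraph G (W.erase u) where
  next := Function.update g.next u v
  adj_of_not_sink := by
    intro i hi
    by_cases hiu : i = u
    · subst hiu; simpa using hadj
    · rw [Function.update_of_ne hiu]
      exact g.adj_of_not_sink i (fun hiW => hi (Finset.mem_erase.mpr ⟨hiu, hiW⟩))
  sink_fixed := by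
    intro i hi
    rw [Function.update_of_ne (Finset.mem_erase.mp hi).1]
    exact g.sink_fixed i (Finset.mem_erase.mp hi).2
  absorbed := by
    intro i
    -- first: any point whose g-orbit avoids u is absorbed in W.erase u along the same orbit
    have key : ∀ z, g.sink z ≠ u → (Function.update g.next u v)^[g.hit z] z ∈ W.erase u := by
      intro z hz
      have havoid : ∀ t, g.next^[t] z ≠ u := by
        intro t hc
        exact hz (by rw [← g.sink_iterate z t, hc, g.sink_of_mem hu])
      have hag : ∀ n, (Function.update g.next u v)^[n] z = g.next^[n] z := by
        intro n
        induction n with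
        | zero => rfl
        | succ n ih =>
          rw [Function.iterate_succ_apply', Function.iterate_succ_apply', ih,
            Function.update_of_ne (havoid n)]
      rw [hag]
      exact Finset.mem_erase.mpr ⟨havoid (g.hit z), g.sink_mem z⟩
    by_cases hi : g.sink i = u
    · -- orbit reaches u, then jumps to v, whose orbit avoids u
      have hagu : ∀ j, j ≤ g.hit i → (Function.update g.next u v)^[j] i = g.next^[j] i := by
        intro j hj
        induction j with
        | zero => rfl
        | succ j ih =>
          rw [Function.iterate_succ_apply', Function.iterate_succ_apply',
            ih (by omega)]
          have : g.next^[j] i ≠ u := by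
            intro hc
            have : g.next^[j] i ∈ W := hc ▸ hu
            exact g.not_mem_of_lt_hit (by omega) this
          rw [Function.update_of_ne this]
      refine ⟨g.hit i + 1 + g.hit v, ?_⟩
      have h1 : (Function.update g.next u v)^[g.hit i] i = u := by
        rw [hagu _ le_rfl]; exact hi
      have h2 : (Function.update g.next u v)^[g.hit i + 1] i = v := by
        rw [Function.iterate_succ_apply', h1]; simp
      rw [show g.hit i + 1 + g.hit v = g.hit v + (g.hit i + 1) by omega,
        Function.iterate_add_apply, h2]
      exact key v hv
    · exact ⟨g.hit i, key i hi⟩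

lemma wcost_attach (Ve : Sym2 V → ℝ) (Vp : V → ℝ) (g : WGraph G W) {u v : V} (hu : u ∈ W)
    (hadj : G.Adj u v) (hv : g.sink v ≠ u) :
    wcost Ve Vp (g.attach u v hu hadj hv) = wcost Ve Vp g + (Ve s(u, v) - Vp u) := by
  have hnext : (g.attach u v hu hadj hv).next = Function.update g.next u v := rfl
  rw [wcost, wcost, hnext, Finset.compl_erase,
    Finset.sum_insert (by simpa using hu)]
  rw [Finset.sum_congr rfl (g := fun i => Ve s(i, g.next i) - Vp i) (fun i hi => by
    rw [Function.update_of_ne (by rintro rfl; exact (Finset.mem_compl.mp hi) hu)])]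
  simp only [Function.update_self]
  ring

lemma wEdges_attach (g : WGraph G W) {u v : V} (hu : u ∈ W) (hadj : G.Adj u v)
    (hv : g.sink v ≠ u) :
    wEdges (g.attach u v hu hadj hv) = insert s(u, v) (wEdges g) := by
  have hnext : (g.attach u v hu hadj hv).next = Function.update g.next u v := rfl
  rw [wEdges, wEdges, hnext, Finset.compl_erase, Finset.image_insert]
  congr 1
  · simp
  · apply Finset.image_congr
    intro i hi
    show s(i, Function.update g.next u v i) = _
    rw [Function.update_of_ne (by rintro rfl; exact (Finset.mem_compl.mp hi) hu)]

end WGraph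

namespace WGraph

variable {V : Type*} [Fintype V] [DecidableEq V] {G : SimpleGraph V} {W : Finset V}

section Reroot

variable (g : WGraph G W) (b : V)

/-- the next-map after rerooting the component of `b` at `b`: the path from `b` to its
sink is reversed, all other arrows are unchanged. -/
def rnext : V → V := fun x =>
  if h : ∃ t, t < g.hit b ∧ g.next^[t + 1] b = x then g.next^[Nat.find h] b
  else if x = b then b else g.next x

variable {g b}

lemma rnext_path {t : ℕ} (ht : t < g.hit b) :
    g.rnext b (g.next^[t + 1] b) = g.next^[t] b := by
  rw [rnext]
  have h : ∃ t', t' < g.hit b ∧ g.next^[t' + 1] b = g.next^[t + 1] b := ⟨t, ht, rfl⟩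
  rw [dif_pos h]
  congr 1
  by_contra hne
  rcases Nat.lt_or_ge (Nat.find h) t with hlt | hge
  · exact g.iterate_ne (a := Nat.find h + 1) (b := t + 1) (by omega) (by omega)
      (Nat.find_spec h).2
  · have hlt2 : t < Nat.find h := by omega
    exact g.iterate_ne (a := t + 1) (b := Nat.find h + 1) (by omega)
      (by have := (Nat.find_spec h).1; omega) (Nat.find_spec h).2.symm

lemma rnext_base : g.rnext b b = b := by
  rw [rnext]
  have h : ¬ ∃ t, t < g.hit b ∧ g.next^[t + 1] b = b := by
    rintro ⟨t, ht, hc⟩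
    exact g.iterate_ne (a := 0) (b := t + 1) (by omega) (by omega) hc.symm
  rw [dif_neg h, if_pos rfl]

/-- membership in the reversed path -/
def OnPath (g : WGraph G W) (b x : V) : Prop := ∃ t, t ≤ g.hit b ∧ g.next^[t] b = x

lemma rnext_off {x : V} (hx : ¬ OnPath g b x) : g.rnext b x = g.next x := by
  rw [rnext]
  have h : ¬ ∃ t, t < g.hit b ∧ g.next^[t + 1] b = x := by
    rintro ⟨t, ht, hc⟩
    exact hx ⟨t + 1, by omega, hc⟩
  rw [dif_neg h, if_neg (fun hc => hx ⟨0, by omega, hc.symm⟩)]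

lemma rnext_iterate_path {t : ℕ} (ht : t ≤ g.hit b) :
    (g.rnext b)^[t] (g.next^[t] b) = b := by
  induction t with
  | zero => rfl
  | succ t ih =>
    rw [Function.iterate_succ_apply, rnext_path (by omega)]
    exact ih (by omega)

lemma onPath_sink : OnPath g b (g.sink b) := ⟨g.hit b, le_rfl, rfl⟩

lemma onPath_base : OnPath g b b := ⟨0, by omega, rfl⟩

lemma mem_of_onPath {x : V} (h : OnPath g b x) (hxW : x ∈ W) : x = g.sink b := by
  obtain ⟨t, ht, rfl⟩ := h
  have : g.hit b ≤ t := g.hit_le hxW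
  exact g.iterate_of_hit_le (by omega)

variable (g b)

def reroot : WGraph G (insert b (W.erase (g.sink b))) where
  next := g.rnext b
  adj_of_not_sink := by
    intro x hx
    rw [Finset.mem_insert, not_or] at hx
    by_cases hp : OnPath g b x
    · obtain ⟨t, ht, rfl⟩ := hp
      have ht0 : t ≠ 0 := by rintro rfl; exact hx.1 rfl
      obtain ⟨t, rfl⟩ := Nat.exists_eq_succ_of_ne_zero ht0
      rw [rnext_path (by omega)]
      have hW : g.next^[t] b ∉ W := g.not_mem_of_lt_hit (by omega)
      have hadj := g.adj_of_not_sink _ hW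
      have he : g.next (g.next^[t] b) = g.next^[t + 1] b :=
        (Function.iterate_succ_apply' _ _ _).symm
      rw [he] at hadj
      exact hadj.symm
    · rw [rnext_off hp]
      apply g.adj_of_not_sink
      intro hxW
      by_cases h : x = g.sink b
      · exact hp (h ▸ onPath_sink)
      · exact hx.2 (Finset.mem_erase.mpr ⟨h, hxW⟩)
  sink_fixed := by
    intro x hx
    rcases Finset.mem_insert.mp hx with rfl | hxe
    · exact rnext_base
    · obtain ⟨hx1, hx2⟩ := Finset.mem_erase.mp hxe
      have hnp : ¬ OnPath g b x := fun hp => hx1 (mem_of_onPath hp hx2)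
      rw [rnext_off hnp]
      exact g.sink_fixed x hx2
  absorbed := by
    intro i
    suffices H : ∀ N i, g.hit i ≤ N → ∃ n, (g.rnext b)^[n] i ∈ insert b (W.erase (g.sink b)) by
      exact H (g.hit i) i le_rfl
    intro N
    induction N with
    | zero =>
      intro i hi
      have hiW : i ∈ W := by
        have : g.sink i = i := by rw [sink, Nat.le_zero.mp hi, Function.iterate_zero_apply]
        exact (g.sink_eq_self_iff).mp this
      by_cases hp : OnPath g b i
      · obtain ⟨t, ht, rfl⟩ := hp
        exact ⟨t, by rw [rnext_iterate_path ht]; exact Finset.mem_insert_self b _⟩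
      · refine ⟨0, ?_⟩
        have : i ≠ g.sink b := fun hc => hp (hc ▸ onPath_sink)
        simp [Finset.mem_insert, Finset.mem_erase, this, hiW]
    | succ N ih =>
      intro i hi
      by_cases hp : OnPath g b i
      · obtain ⟨t, ht, rfl⟩ := hp
        exact ⟨t, by rw [rnext_iterate_path ht]; exact Finset.mem_insert_self b _⟩
      by_cases hiW : i ∈ W
      · refine ⟨0, ?_⟩
        have : i ≠ g.sink b := fun hc => hp (hc ▸ onPath_sink)
        simp [Finset.mem_insert, Finset.mem_erase, this, hiW]
      · obtain ⟨n, hn⟩ := ih (g.next i) (by have := g.hit_next_lt hiW; omega)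
        refine ⟨n + 1, ?_⟩
        rw [Function.iterate_succ_apply, rnext_off hp]
        exact hn

end Reroot

end WGraph

namespace WGraph

variable {V : Type*} [Fintype V] [DecidableEq V] {G : SimpleGraph V} {W : Finset V}

section RerootLemmas

variable (g : WGraph G W) (b : V)

lemma sink_reroot (x : V) :
    (g.reroot b).sink x = if g.sink x = g.sink b then b else g.sink x := by
  suffices H : ∀ N x, g.hit x ≤ N →
      (g.reroot b).sink x = if g.sink x = g.sink b then b else g.sink x by
    exact H (g.hit x) x le_rfl
  intro N
  induction N with
  | zero =>
    intro x hx
    have hxW : x ∈ W := by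
      have : g.sink x = x := by rw [sink, Nat.le_zero.mp hx, Function.iterate_zero_apply]
      exact (g.sink_eq_self_iff).mp this
    have hsx : g.sink x = x := g.sink_of_mem hxW
    by_cases h : g.sink x = g.sink b
    · -- x = sink b, which lies on the path; reroot sends it to b
      rw [if_pos h]
      have hxp : OnPath g b x := by rw [← hsx, h]; exact onPath_sink
      obtain ⟨t, ht, rfl⟩ := hxp
      have h1 : (g.reroot b).next^[t] (g.next^[t] b) = b := rnext_iterate_path ht
      have := (g.reroot b).sink_iterate (g.next^[t] b) t
      rw [h1, (g.reroot b).sink_of_mem (Finset.mem_insert_self b _)] at this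
      exact this.symm
    · rw [if_neg h, hsx]
      apply (g.reroot b).sink_of_mem
      exact Finset.mem_insert_of_mem (Finset.mem_erase.mpr ⟨by rw [← hsx]; exact h, hxW⟩)
  | succ N ih =>
    intro x hx
    by_cases hp : OnPath g b x
    · obtain ⟨t, ht, rfl⟩ := hp
      have h : g.sink (g.next^[t] b) = g.sink b := g.sink_iterate b t
      rw [if_pos h]
      have h1 : (g.reroot b).next^[t] (g.next^[t] b) = b := rnext_iterate_path ht
      have := (g.reroot b).sink_iterate (g.next^[t] b) t
      rw [h1, (g.reroot b).sink_of_mem (Finset.mem_insert_self b _)] at this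
      exact this.symm
    by_cases hxW : x ∈ W
    · have hsx : g.sink x = x := g.sink_of_mem hxW
      have h : g.sink x ≠ g.sink b := by
        rw [hsx]; intro hc; exact hp (hc ▸ onPath_sink)
      rw [if_neg h, hsx]
      apply (g.reroot b).sink_of_mem
      exact Finset.mem_insert_of_mem (Finset.mem_erase.mpr ⟨by rw [← hsx]; exact h, hxW⟩)
    · have h1 : (g.reroot b).next x = g.next x := rnext_off hp
      have h2 := (g.reroot b).sink_next x
      rw [h1] at h2
      rw [← h2, ih (g.next x) (by have := g.hit_next_lt hxW; omega), g.sink_next]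

lemma wEdges_reroot : wEdges (g.reroot b) = wEdges g := by
  ext e
  simp only [wEdges, Finset.mem_image, Finset.mem_compl]
  constructor
  · rintro ⟨x, hx, rfl⟩
    rw [Finset.mem_insert, not_or] at hx
    by_cases hp : OnPath g b x
    · obtain ⟨t, ht, rfl⟩ := hp
      have ht0 : t ≠ 0 := by rintro rfl; exact hx.1 rfl
      obtain ⟨t, rfl⟩ := Nat.exists_eq_succ_of_ne_zero ht0
      refine ⟨g.next^[t] b, g.not_mem_of_lt_hit (by omega), ?_⟩
      have h1 : (g.reroot b).next (g.next^[t + 1] b) = g.next^[t] b := rnext_path (by omega)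
      have h2 : g.next (g.next^[t] b) = g.next^[t + 1] b :=
        (Function.iterate_succ_apply' _ _ _).symm
      rw [h1, h2, Sym2.eq_swap]
    · have hxW : x ∉ W := by
        intro hxW
        by_cases h : x = g.sink b
        · exact hp (h ▸ onPath_sink)
        · exact hx.2 (Finset.mem_erase.mpr ⟨h, hxW⟩)
      refine ⟨x, hxW, ?_⟩
      rw [show (g.reroot b).next x = g.next x from rnext_off hp]
  · rintro ⟨y, hy, rfl⟩
    by_cases hp : OnPath g b y
    · obtain ⟨t, ht, rfl⟩ := hp
      have htm : t < g.hit b := by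
        rcases Nat.lt_or_ge t (g.hit b) with h | h
        · exact h
        · exfalso; exact hy (by rw [g.iterate_of_hit_le h]; exact g.sink_mem b)
      refine ⟨g.next^[t + 1] b, ?_, ?_⟩
      · rw [Finset.mem_insert, not_or]
        constructor
        · intro hc
          exact g.iterate_ne (a := 0) (b := t + 1) (by omega) (by omega) hc.symm
        · rw [Finset.mem_erase, not_and_or]
          by_cases hc : t + 1 = g.hit b
          · left; rw [hc]; simp [sink]
          · right; exact g.not_mem_of_lt_hit (by omega)
      · have h1 : (g.reroot b).next (g.next^[t + 1] b) = g.next^[t] b := rnext_path htm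
        have h2 : g.next (g.next^[t] b) = g.next^[t + 1] b :=
          (Function.iterate_succ_apply' _ _ _).symm
        rw [h1, h2, Sym2.eq_swap]
    · refine ⟨y, ?_, ?_⟩
      · rw [Finset.mem_insert, not_or]
        exact ⟨fun hc => hp (hc ▸ onPath_base), fun hc => hy (Finset.mem_erase.mp hc).2⟩
      · rw [show (g.reroot b).next y = g.next y from rnext_off hp]

lemma wcost_reroot (Ve : Sym2 V → ℝ) (Vp : V → ℝ) :
    wcost Ve Vp (g.reroot b) = wcost Ve Vp g + Vp b - Vp (g.sink b) := by
  rw [wcost_eq_edges, wcost_eq_edges, wEdges_reroot]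
  by_cases hb : b ∈ W
  · have hsb : g.sink b = b := g.sink_of_mem hb
    rw [hsb]
    have : insert b (W.erase b) = W := Finset.insert_erase hb
    rw [this]
    ring
  · have hsb : g.sink b ∈ W := g.sink_mem b
    have hne : g.sink b ≠ b := fun hc => hb (hc ▸ hsb)
    have hcompl : (insert b (W.erase (g.sink b)))ᶜ = insert (g.sink b) (Wᶜ.erase b) := by
      ext x
      simp only [Finset.mem_compl, Finset.mem_insert, Finset.mem_erase, not_or, not_and,
        Finset.mem_compl]
      constructor
      · rintro ⟨h1, h2⟩
        by_cases hx : x = g.sink b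
        · exact Or.inl hx
        · exact Or.inr ⟨h1, h2 hx⟩
      · rintro (rfl | ⟨h1, h2⟩)
        · exact ⟨hne, fun h => absurd rfl h⟩
        · exact ⟨h1, fun _ => h2⟩
    rw [hcompl, Finset.sum_insert (by simp [hsb]),
      Finset.sum_erase_eq_sub (by simpa using hb)]
    ring

lemma reroot_sinks_card : (insert b (W.erase (g.sink b))).card = W.card := by
  by_cases hb : b ∈ W
  · rw [g.sink_of_mem hb, Finset.insert_erase hb]
  · have hsb : g.sink b ∈ W := g.sink_mem b
    have hne : g.sink b ≠ b := fun hc => hb (hc ▸ hsb)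
    rw [Finset.card_insert_of_notMem (by simp [hb]), Finset.card_erase_of_mem hsb]
    have : 1 ≤ W.card := Finset.card_pos.mpr ⟨_, hsb⟩
    omega

end RerootLemmas

end WGraph

namespace WGraph

variable {V : Type*} [Fintype V] [DecidableEq V] {G : SimpleGraph V} {W : Finset V}

lemma sink_copy (g : WGraph G W) {W' : Finset V} (h : W = W') (x : V) :
    (g.copy h).sink x = g.sink x := by subst h; rfl

/-- splitting: cut the arrow out of `x` and make `w` (in the severed part) the new sink -/
lemma lemma_split (Ve : Sym2 V → ℝ) (Vp : V → ℝ) (g : WGraph G W) {x w : V} (hx : x ∉ W)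
    (hw : (g.delete x hx).sink w = x) :
    ∃ g' : WGraph G (insert w W),
      wcost Ve Vp g' = wcost Ve Vp g - Ve s(x, g.next x) + Vp w := by
  set d := g.delete x hx with hd
  have hsets : insert w ((insert x W).erase (d.sink w)) = insert w W := by
    rw [hw, Finset.erase_insert hx]
  refine ⟨(d.reroot w).copy hsets, ?_⟩
  rw [wcost_copy, wcost_reroot, wcost_delete, hw]
  ring

/-- edge swap: replace the arrow out of `x` by the edge `{p, q}`, where `p` is severed
from its sink by the cut and `q` is not -/
lemma lemma_swap (Ve : Sym2 V → ℝ) (Vp : V → ℝ) (g : WGraph G W) {x p q : V} (hx : x ∉ W)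
    (hp : (g.delete x hx).sink p = x) (hq1 : (g.delete x hx).sink q ≠ x)
    (hq2 : (g.delete x hx).sink q ≠ p) (hadj : G.Adj p q) :
    ∃ g' : WGraph G W,
      wcost Ve Vp g' = wcost Ve Vp g - Ve s(x, g.next x) + Ve s(p, q) := by
  set d := g.delete x hx with hd
  have hpW : p ∉ W := by
    intro hpW
    have : d.sink p = p := d.sink_of_mem (Finset.mem_insert_of_mem hpW)
    rw [hp] at this; exact hx (this ▸ hpW)
  have hsets : insert p ((insert x W).erase (d.sink p)) = insert p W := by
    rw [hp, Finset.erase_insert hx]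
  set r := (d.reroot p).copy hsets with hr
  have hsq : r.sink q ≠ p := by
    rw [hr, sink_copy, sink_reroot, hp]
    rw [if_neg hq1]
    exact hq2
  have hu : p ∈ insert p W := Finset.mem_insert_self p W
  have hsets2 : (insert p W).erase p = W := Finset.erase_insert hpW
  refine ⟨((r.attach p q hu hadj hsq).copy hsets2), ?_⟩
  rw [wcost_copy, wcost_attach, hr, wcost_copy, wcost_reroot, hp, wcost_delete]
  ring

/-- merging: reroot the component of `u` at `u` and attach it across the edge `{u, v}`,
removing the sink of `u`'s component -/
lemma lemma_merge (Ve : Sym2 V → ℝ) (Vp : V → ℝ) (g : WGraph G W) {u v : V}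
    (hadj : G.Adj u v) (h1 : g.sink v ≠ g.sink u) (h2 : g.sink v ≠ u) :
    ∃ g' : WGraph G (W.erase (g.sink u)),
      wcost Ve Vp g' = wcost Ve Vp g + Ve s(u, v) - Vp (g.sink u) ∧
      wEdges g' = insert s(u, v) (wEdges g) := by
  set r := g.reroot u with hr
  have hsv : r.sink v ≠ u := by
    rw [hr, sink_reroot, if_neg h1]; exact h2
  have hu : u ∈ insert u (W.erase (g.sink u)) := Finset.mem_insert_self _ _
  have hsets : (insert u (W.erase (g.sink u))).erase u = W.erase (g.sink u) := by
    apply Finset.erase_insert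
    intro hc
    obtain ⟨hc1, hc2⟩ := Finset.mem_erase.mp hc
    exact hc1 (g.sink_of_mem hc2).symm
  refine ⟨(r.attach u v hu hadj hsv).copy hsets, ?_, ?_⟩
  · rw [wcost_copy, wcost_attach, hr, wcost_reroot]
    ring
  · rw [wEdges_copy, wEdges_attach, hr, wEdges_reroot]

end WGraph

namespace WGraph

variable {V : Type*} [Fintype V] [DecidableEq V] {G : SimpleGraph V}

lemma key_lemma (Ve : Sym2 V → ℝ) (Vp : V → ℝ) (hgen : Generic G Ve Vp) (k : ℕ)
    {W₁ W₂ : Finset V} (g₁ : WGraph G W₁) (g₂ : WGraph G W₂)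
    (h₁ : IsOptimalWGraph G Ve Vp k W₁ g₁) (h₂ : IsOptimalWGraph G Ve Vp (k + 1) W₂ g₂)
    {w : V} (hw₂ : w ∈ W₂) (hw₁ : w ∉ W₁) :
    ∃ u : V, u ∉ W₁ ∧
      Ve s(u, g₁.next u) - Vp w = wcost Ve Vp g₁ - wcost Ve Vp g₂ ∧
      ∃ g₃ : WGraph G (W₂.erase w), wcost Ve Vp g₃ = wcost Ve Vp g₁ ∧
        wEdges g₃ = insert s(u, g₁.next u) (wEdges g₂) := by
  obtain ⟨hc₁, hopt₁⟩ := h₁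
  obtain ⟨hc₂, hopt₂⟩ := h₂
  set c₁ := wcost Ve Vp g₁ with hc1def
  set c₂ := wcost Ve Vp g₂ with hc2def
  have hsw : g₁.sink w ≠ w := fun hc => hw₁ (hc ▸ g₁.sink_mem w)
  have hsinkw₂ : g₂.sink w = w := g₂.sink_of_mem hw₂
  -- Case A is impossible
  have hAB : g₂.sink (g₁.sink w) ≠ g₂.sink w := by
    intro hA
    -- swap sinks in g₁ : replace g₁.sink w by w
    have e1 : c₁ ≤ c₁ + Vp w - Vp (g₁.sink w) := by
      have := hopt₁ _ (g₁.reroot w) (by rw [g₁.reroot_sinks_card w, hc₁])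
      rwa [wcost_reroot] at this
    -- swap sinks in g₂ : replace w by g₁.sink w
    have e2 : c₂ ≤ c₂ + Vp (g₁.sink w) - Vp w := by
      have := hopt₂ _ (g₂.reroot (g₁.sink w)) (by rw [g₂.reroot_sinks_card, hc₂])
      rwa [wcost_reroot, hA, hsinkw₂] at this
    have : Vp (g₁.sink w) = Vp w := by linarith
    exact hsw (hgen.1 this)
  -- find the first point on the g₁-path from w where the g₂-component changes
  have hex : ∃ t, g₂.sink (g₁.next^[t] w) ≠ g₂.sink w := ⟨g₁.hit w, hAB⟩
  set t₀ := Nat.find hex with ht₀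
  have ht₀pos : 0 < t₀ := by
    rcases Nat.eq_zero_or_pos t₀ with h0 | h0
    · exfalso
      have h2 := Nat.find_spec hex
      rw [← ht₀] at h2
      rw [h0] at h2
      exact h2 rfl
    · exact h0
  set u := g₁.next^[t₀ - 1] w with hudef
  have hvu : g₁.next^[t₀] w = g₁.next u := by
    rw [hudef]
    conv_lhs => rw [show t₀ = (t₀ - 1) + 1 from by omega]
    rw [Function.iterate_succ_apply']
  have hu2 : g₂.sink u = g₂.sink w := by
    have := Nat.find_min hex (show t₀ - 1 < t₀ by omega)
    rwa [not_not] at this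
  have hv2 : g₂.sink (g₁.next u) ≠ g₂.sink w := by
    rw [← hvu]; exact Nat.find_spec hex
  have huW₁ : u ∉ W₁ := by
    intro h
    have hge : g₁.hit w ≤ t₀ - 1 := by
      by_contra hlt
      exact g₁.not_mem_of_lt_hit (by omega) h
    have he : u = g₁.sink w := g₁.iterate_of_hit_le hge
    rw [he] at hu2
    exact hAB hu2
  have hadj : G.Adj u (g₁.next u) := g₁.adj_of_not_sink u huW₁
  -- split g₁ at u, making w the new sink of the severed part
  have hsplit : (g₁.delete u huW₁).sink w = u :=
    g₁.sink_delete_of_hits huW₁ ⟨t₀ - 1, rfl⟩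
  obtain ⟨gS, hgS⟩ := lemma_split Ve Vp g₁ huW₁ hsplit
  have hE1 : c₂ ≤ c₁ - Ve s(u, g₁.next u) + Vp w := by
    have := hopt₂ _ gS (by rw [Finset.card_insert_of_notMem hw₁, hc₁])
    rwa [hgS] at this
  -- merge g₂ along the edge {u, next u}, dropping the sink w
  have hu2' : g₂.sink u = w := by rw [hu2, hsinkw₂]
  have hv2' : g₂.sink (g₁.next u) ≠ w := by
    intro hc; exact hv2 (by rw [hc, hsinkw₂])
  have hm1 : g₂.sink (g₁.next u) ≠ g₂.sink u := by
    intro hc; exact hv2' (by rw [hc, hu2'])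
  have hm2 : g₂.sink (g₁.next u) ≠ u := by
    by_cases huW₂ : u ∈ W₂
    · have he : u = w := by rw [← hu2', g₂.sink_of_mem huW₂]
      intro hc; exact hv2' (by rw [hc, he])
    · intro hc; exact huW₂ (hc ▸ g₂.sink_mem (g₁.next u))
  obtain ⟨gM, hgM, hgMe⟩ := lemma_merge Ve Vp g₂ hadj hm1 hm2
  have hMsets : W₂.erase (g₂.sink u) = W₂.erase w := by rw [hu2']
  set gM' := gM.copy hMsets with hgM'
  have hE2 : c₁ ≤ c₂ + Ve s(u, g₁.next u) - Vp w := by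
    have hcard : (W₂.erase w).card = k := by
      rw [Finset.card_erase_of_mem hw₂, hc₂]; omega
    have := hopt₁ _ gM' hcard
    rwa [hgM', wcost_copy, hgM, hu2'] at this
  refine ⟨u, huW₁, by linarith, gM', ?_, ?_⟩
  · rw [hgM', wcost_copy, hgM, hu2']
    linarith
  · rw [hgM', wEdges_copy, hgMe]

end WGraph

namespace WGraph

variable {V : Type*} [Fintype V] [DecidableEq V] {G : SimpleGraph V}

lemma exch_lemma (Ve : Sym2 V → ℝ) (Vp : V → ℝ) (hgen : Generic G Ve Vp) (k : ℕ)
    {W₁ : Finset V} (g₁ g₃ : WGraph G W₁) (h₁ : IsOptimalWGraph G Ve Vp k W₁ g₁)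
    (hc : wcost Ve Vp g₃ = wcost Ve Vp g₁) :
    wEdges g₃ ⊆ wEdges g₁ := by
  obtain ⟨hc₁, hopt₁⟩ := h₁
  intro d hd
  by_contra hd1
  simp only [wEdges, Finset.mem_image, Finset.mem_compl] at hd
  obtain ⟨p, hpW, rfl⟩ := hd
  set q := g₃.next p with hq
  have hadjpq : G.Adj p q := g₃.adj_of_not_sink p hpW
  set D := g₃.delete p hpW with hD
  have hAp : D.sink p = p := D.sink_of_mem (Finset.mem_insert_self p _)
  have hAW : ∀ x, x ∈ W₁ → D.sink x ≠ p := by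
    intro x hx
    rw [D.sink_of_mem (Finset.mem_insert_of_mem hx)]
    rintro rfl; exact hpW hx
  -- q is not severed from its sink by deleting the arrow out of p (no cycles)
  have hAq : D.sink q ≠ p := by
    intro hcon
    have hex : ∃ n, D.next^[n] q = p := ⟨D.hit q, hcon⟩
    have hagree : ∀ j, j ≤ Nat.find hex → D.next^[j] q = g₃.next^[j] q := by
      intro j hj
      induction j with
      | zero => rfl
      | succ j ih =>
        rw [Function.iterate_succ_apply', Function.iterate_succ_apply', ih (by omega)]
        have hne : g₃.next^[j] q ≠ p := by
          rw [← ih (by omega)]; exact Nat.find_min hex (by omega)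
        show Function.update g₃.next p p _ = _
        rw [Function.update_of_ne hne]
    have h2 : g₃.next^[Nat.find hex] q = p := by
      rw [← hagree _ le_rfl]; exact Nat.find_spec hex
    have hret : g₃.next^[Nat.find hex + 1] p = p := by
      rw [Function.iterate_succ_apply, ← hq]; exact h2
    exact g₃.no_return hpW (by omega) hret
  -- the exchange inequality: any crossing edge is strictly more expensive
  have hswap : ∀ x y : V, D.sink x = p → D.sink y ≠ p → G.Adj x y →
      s(x, y) ≠ s(p, q) → Ve s(p, q) < Ve s(x, y) := by
    intro x y hAx hAy hadjxy hne
    have hq2 : D.sink y ≠ x := by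
      by_cases hxp : x = p
      · rw [hxp]; exact hAy
      · have hxW : x ∉ W₁ := fun hxW => (hAW x hxW) hAx
        intro hcon
        have hmem : x ∈ insert p W₁ := hcon ▸ D.sink_mem y
        rcases Finset.mem_insert.mp hmem with h | h
        · exact hxp h
        · exact hxW h
    obtain ⟨g', hg'⟩ := lemma_swap Ve Vp g₃ hpW hAx hAy hq2 hadjxy
    have hle := hopt₁ _ g' hc₁
    rw [hg', hc] at hle
    have hVe : Ve s(p, q) ≤ Ve s(x, y) := by linarith
    rcases lt_or_eq_of_le hVe with h | h
    · exact h
    · exact absurd (hgen.2.1 _ ((SimpleGraph.mem_edgeSet G).mpr hadjxy) _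
        ((SimpleGraph.mem_edgeSet G).mpr hadjpq) h.symm) hne
  -- the final contradictions via an edge swap in g₁
  have hfinal : ∀ x : V, ∀ hxW : x ∉ W₁, (g₁.delete x hxW).sink p = x →
      (g₁.delete x hxW).sink q ≠ x → (g₁.delete x hxW).sink q ≠ p →
      Ve s(p, q) < Ve s(x, g₁.next x) → False := by
    intro x hxW hp1 hq1 hq2 hlt
    obtain ⟨g'', hg''⟩ := lemma_swap Ve Vp g₁ hxW hp1 hq1 hq2 hadjpq
    have hle := hopt₁ _ g'' hc₁
    rw [hg''] at hle
    linarith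
  have hfinal' : ∀ x : V, ∀ hxW : x ∉ W₁, (g₁.delete x hxW).sink q = x →
      (g₁.delete x hxW).sink p ≠ x → (g₁.delete x hxW).sink p ≠ q →
      Ve s(p, q) < Ve s(x, g₁.next x) → False := by
    intro x hxW hp1 hq1 hq2 hlt
    obtain ⟨g'', hg''⟩ := lemma_swap Ve Vp g₁ hxW hp1 hq1 hq2 hadjpq.symm
    have hle := hopt₁ _ g'' hc₁
    have hswp : s(q, p) = s(p, q) := Sym2.eq_swap
    rw [hg'', hswp] at hle
    linarith
  by_cases hcase : g₁.sink p = g₁.sink q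
  · -- p and q lie in the same g₁-component
    have hexI : ∃ t, ∃ s, s ≤ g₁.hit q ∧ g₁.next^[s] q = g₁.next^[t] p := by
      refine ⟨g₁.hit p, g₁.hit q, le_rfl, ?_⟩
      show g₁.sink q = g₁.sink p
      exact hcase.symm
    obtain ⟨j, hjle, hbj⟩ := Nat.find_spec hexI
    set i := Nat.find hexI with hi
    have hile : i ≤ g₁.hit p := Nat.find_min' hexI
      ⟨g₁.hit q, le_rfl, show g₁.sink q = g₁.sink p from hcase.symm⟩
    by_cases hA : ∀ t, t ≤ i → D.sink (g₁.next^[t] p) = p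
    · -- the crossing is on the q-side of the g₁-path
      have hexB : ∃ s, D.sink (g₁.next^[s] q) = p := ⟨j, by rw [hbj]; exact hA i le_rfl⟩
      set s₀ := Nat.find hexB with hs₀
      have hs₀pos : 0 < s₀ := by
        rcases Nat.eq_zero_or_pos s₀ with h0 | h0
        · exfalso
          have h2 := Nat.find_spec hexB
          rw [← hs₀, h0] at h2
          simp only [Function.iterate_zero_apply] at h2
          exact hAq h2
        · exact h0
      have hs₀le : s₀ ≤ j := Nat.find_min' hexB (by rw [hbj]; exact hA i le_rfl)
      set xx := g₁.next^[s₀ - 1] q with hxx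
      have hnAxx : D.sink xx ≠ p := Nat.find_min hexB (show s₀ - 1 < s₀ by omega)
      have hyyeq : g₁.next^[s₀] q = g₁.next xx := by
        rw [hxx]
        conv_lhs => rw [show s₀ = (s₀ - 1) + 1 from by omega]
        rw [Function.iterate_succ_apply']
      have hAyy : D.sink (g₁.next xx) = p := by rw [← hyyeq]; exact Nat.find_spec hexB
      have hxxW₁ : xx ∉ W₁ := by
        rw [hxx]; exact g₁.not_mem_of_lt_hit (by omega)
      have hadjx : G.Adj xx (g₁.next xx) := g₁.adj_of_not_sink xx hxxW₁
      have hfne : s(xx, g₁.next xx) ≠ s(p, q) := by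
        intro hcon
        exact hd1 (hcon ▸ g₁.mem_wEdges hxxW₁)
      have hlt : Ve s(p, q) < Ve s(xx, g₁.next xx) := by
        have hh := hswap (g₁.next xx) xx hAyy hnAxx hadjx.symm
          (by rw [Sym2.eq_swap]; exact hfne)
        rwa [Sym2.eq_swap (a := g₁.next xx)] at hh
      have havp : ∀ t, g₁.next^[t] p ≠ xx := by
        apply g₁.avoids_of_avoids_le_hit hxxW₁
        intro t ht hcon
        rcases Nat.lt_or_ge t i with hti | hti
        · refine Nat.find_min hexI hti ⟨s₀ - 1, ?_, by rw [hcon, hxx]⟩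
          omega
        · have htp : g₁.next^[t] p = g₁.next^[j + (t - i)] q := by
            have h1 : g₁.next^[t] p = g₁.next^[t - i] (g₁.next^[i] p) := by
              rw [← Function.iterate_add_apply]; congr 1; omega
            rw [h1, ← hbj, ← Function.iterate_add_apply]
            congr 1; omega
          rw [htp] at hcon
          rcases Nat.lt_or_ge (g₁.hit q) (j + (t - i)) with hbig | hsmall
          · have hsk : g₁.next^[j + (t - i)] q = g₁.sink q := g₁.iterate_of_hit_le (by omega)
            rw [hsk] at hcon
            exact hxxW₁ (hcon ▸ g₁.sink_mem q)
          · exact g₁.iterate_ne (x := q) (a := s₀ - 1) (b := j + (t - i)) (by omega)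
              (by omega) (by rw [hcon, hxx])
      have hq1' : (g₁.delete xx hxxW₁).sink q = xx :=
        g₁.sink_delete_of_hits hxxW₁ ⟨s₀ - 1, hxx.symm⟩
      have hp1' : (g₁.delete xx hxxW₁).sink p = g₁.sink p :=
        g₁.sink_delete_of_avoids hxxW₁ havp
      have hqW₁ : q ∉ W₁ := by
        intro hqq
        have h0 : g₁.hit q = 0 := g₁.hit_eq_zero hqq
        omega
      exact hfinal' xx hxxW₁ hq1'
        (by rw [hp1']; intro hcon; exact hxxW₁ (hcon ▸ g₁.sink_mem p))
        (by rw [hp1']; intro hcon; exact hqW₁ (hcon ▸ g₁.sink_mem p)) hlt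
    · -- the crossing is on the p-side of the g₁-path
      push_neg at hA
      set t₁ := Nat.find hA with ht₁
      obtain ⟨ht₁le, ht₁ne⟩ := Nat.find_spec hA
      have ht₁pos : 0 < t₁ := by
        rcases Nat.eq_zero_or_pos t₁ with h0 | h0
        · exfalso
          have h2 := ht₁ne
          rw [← ht₁] at h2  -- no-op safeguard
          rw [h0] at h2
          simp only [Function.iterate_zero_apply] at h2
          exact h2 hAp
        · exact h0
      set x := g₁.next^[t₁ - 1] p with hx
      have hAx : D.sink x = p := by
        have hmin := Nat.find_min hA (show t₁ - 1 < t₁ by omega)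
        rw [not_and] at hmin
        have h3 := hmin (by omega)
        rwa [not_not] at h3
      have hyeq : g₁.next^[t₁] p = g₁.next x := by
        rw [hx]
        conv_lhs => rw [show t₁ = (t₁ - 1) + 1 from by omega]
        rw [Function.iterate_succ_apply']
      have hAy : D.sink (g₁.next x) ≠ p := by rw [← hyeq]; exact ht₁ne
      have hxW₁ : x ∉ W₁ := by
        rw [hx]; exact g₁.not_mem_of_lt_hit (by omega)
      have hadjxy : G.Adj x (g₁.next x) := g₁.adj_of_not_sink x hxW₁
      have hfne : s(x, g₁.next x) ≠ s(p, q) := by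
        intro hcon
        exact hd1 (hcon ▸ g₁.mem_wEdges hxW₁)
      have hlt : Ve s(p, q) < Ve s(x, g₁.next x) :=
        hswap x (g₁.next x) hAx hAy hadjxy hfne
      have hp1 : (g₁.delete x hxW₁).sink p = x :=
        g₁.sink_delete_of_hits hxW₁ ⟨t₁ - 1, hx.symm⟩
      have havq : ∀ t, g₁.next^[t] q ≠ x := by
        apply g₁.avoids_of_avoids_le_hit hxW₁
        intro t ht hcon
        exact Nat.find_min hexI (show t₁ - 1 < i by omega) ⟨t, ht, by rw [hcon, hx]⟩
      have hq1 : (g₁.delete x hxW₁).sink q = g₁.sink q :=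
        g₁.sink_delete_of_avoids hxW₁ havq
      exact hfinal x hxW₁ hp1
        (by rw [hq1]; intro hcon; exact hxW₁ (hcon ▸ g₁.sink_mem q))
        (by rw [hq1]; intro hcon; exact hpW (hcon ▸ g₁.sink_mem q)) hlt
  · -- p and q lie in different g₁-components
    have hexA : ∃ t, D.sink (g₁.next^[t] p) ≠ p := by
      refine ⟨g₁.hit p, ?_⟩
      show D.sink (g₁.sink p) ≠ p
      exact hAW _ (g₁.sink_mem p)
    set t₁ := Nat.find hexA with ht₁
    have ht₁pos : 0 < t₁ := by
      rcases Nat.eq_zero_or_pos t₁ with h0 | h0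
      · exfalso
        have h2 := Nat.find_spec hexA
        rw [← ht₁, h0] at h2
        simp only [Function.iterate_zero_apply] at h2
        exact h2 hAp
      · exact h0
    set x := g₁.next^[t₁ - 1] p with hx
    have hAx : D.sink x = p := by
      have hmin := Nat.find_min hexA (show t₁ - 1 < t₁ by omega)
      rwa [not_not] at hmin
    have hyeq : g₁.next^[t₁] p = g₁.next x := by
      rw [hx]
      conv_lhs => rw [show t₁ = (t₁ - 1) + 1 from by omega]
      rw [Function.iterate_succ_apply']
    have hAy : D.sink (g₁.next x) ≠ p := by rw [← hyeq]; exact Nat.find_spec hexA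
    have hxW₁ : x ∉ W₁ := fun hxW => (hAW x hxW) hAx
    have hadjxy : G.Adj x (g₁.next x) := g₁.adj_of_not_sink x hxW₁
    have hfne : s(x, g₁.next x) ≠ s(p, q) := by
      intro hcon
      exact hd1 (hcon ▸ g₁.mem_wEdges hxW₁)
    have hlt : Ve s(p, q) < Ve s(x, g₁.next x) :=
      hswap x (g₁.next x) hAx hAy hadjxy hfne
    have hp1 : (g₁.delete x hxW₁).sink p = x :=
      g₁.sink_delete_of_hits hxW₁ ⟨t₁ - 1, hx.symm⟩
    have havq : ∀ t, g₁.next^[t] q ≠ x := by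
      intro t hcon
      apply hcase
      rw [← g₁.sink_iterate q t, hcon, hx, g₁.sink_iterate]
    have hq1 : (g₁.delete x hxW₁).sink q = g₁.sink q :=
      g₁.sink_delete_of_avoids hxW₁ havq
    exact hfinal x hxW₁ hp1
      (by rw [hq1]; intro hcon; exact hxW₁ (hcon ▸ g₁.sink_mem q))
      (by rw [hq1]; intro hcon; exact hpW (hcon ▸ g₁.sink_mem q)) hlt

end WGraph

/-- under the genericness assumption the optimal `W`-graphs are nested:
the sink set of the optimal `W`-graph with `k` sinks is contained in that of the optimal
`W`-graph with `k+1` sinks, and the edge set of the optimal forest with `k+1` sinks is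
contained in the edge set of the optimal forest with `k` sinks. -/
theorem optimal_wgraphs_nested {V : Type*} [Fintype V] [DecidableEq V]
    (G : SimpleGraph V) (hG : G.Connected) (Ve : Sym2 V → ℝ) (Vp : V → ℝ)
    (hgen : Generic G Ve Vp) (k : ℕ) (hk : 1 ≤ k)
    (W₁ : Finset V) (g₁ : WGraph G W₁) (h₁ : IsOptimalWGraph G Ve Vp k W₁ g₁)
    (W₂ : Finset V) (g₂ : WGraph G W₂) (h₂ : IsOptimalWGraph G Ve Vp (k + 1) W₂ g₂) :
    W₁ ⊆ W₂ ∧ wEdges g₂ ⊆ wEdges g₁ := by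
  have hnsub : ¬ W₂ ⊆ W₁ := by
    intro hs
    have hcc := Finset.card_le_card hs
    rw [h₁.1, h₂.1] at hcc; omega
  obtain ⟨w0, hw0₂, hw0₁⟩ := Finset.not_subset.mp hnsub
  have goal1 : W₁ ⊆ W₂ := by
    by_contra hns
    obtain ⟨a, ha₁, ha₂⟩ := Finset.not_subset.mp hns
    have hint : (W₂ ∩ W₁).card ≤ k - 1 := by
      have hsub2 : W₂ ∩ W₁ ⊆ W₁.erase a := by
        intro x hx
        obtain ⟨hx2, hx1⟩ := Finset.mem_inter.mp hx
        exact Finset.mem_erase.mpr ⟨fun hc => ha₂ (hc ▸ hx2), hx1⟩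
      have hcc := Finset.card_le_card hsub2
      rwa [Finset.card_erase_of_mem ha₁, h₁.1] at hcc
    have hsd : 1 < (W₂ \ W₁).card := by
      have h5 := Finset.card_sdiff_add_card_inter W₂ W₁
      rw [h₂.1] at h5
      omega
    obtain ⟨w, hw, w', hw', hne⟩ := Finset.one_lt_card.mp hsd
    obtain ⟨hw2, hw1⟩ := Finset.mem_sdiff.mp hw
    obtain ⟨hw2', hw1'⟩ := Finset.mem_sdiff.mp hw'
    obtain ⟨u, huW, hueq, -⟩ := WGraph.key_lemma Ve Vp hgen k g₁ g₂ h₁ h₂ hw2 hw1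
    obtain ⟨u', huW', hueq', -⟩ := WGraph.key_lemma Ve Vp hgen k g₁ g₂ h₁ h₂ hw2' hw1'
    have hedge : s(u, g₁.next u) ∈ G.edgeSet :=
      (SimpleGraph.mem_edgeSet G).mpr (g₁.adj_of_not_sink u huW)
    have hedge' : s(u', g₁.next u') ∈ G.edgeSet :=
      (SimpleGraph.mem_edgeSet G).mpr (g₁.adj_of_not_sink u' huW')
    have hg := hgen.2.2 _ hedge _ hedge' w w' (by rw [hueq, hueq'])
    exact hne hg.2
  refine ⟨goal1, ?_⟩
  obtain ⟨u, huW, hueq, g₃, hg₃c, hg₃e⟩ :=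
    WGraph.key_lemma Ve Vp hgen k g₁ g₂ h₁ h₂ hw0₂ hw0₁
  have hsets : W₂.erase w0 = W₁ := by
    have hsub1 : W₁ ⊆ W₂.erase w0 := fun x hx =>
      Finset.mem_erase.mpr ⟨fun hc => hw0₁ (hc ▸ hx), goal1 hx⟩
    have hcard : (W₂.erase w0).card ≤ W₁.card := by
      rw [Finset.card_erase_of_mem hw0₂, h₂.1, h₁.1]; omega
    exact (Finset.eq_of_subset_of_card_le hsub1 hcard).symm
  have hsub := WGraph.exch_lemma Ve Vp hgen k g₁ (g₃.copy hsets) h₁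
    (by rw [WGraph.wcost_copy, hg₃c])
  intro e he
  apply hsub
  rw [WGraph.wEdges_copy, hg₃e]
  exact Finset.mem_insert_of_mem he
end

section
/- Under the genericness assumption, the optimal values V^{(k)} = min over W-graphs with k sinks of ∑_{(i→j)} (V_{ij} − V_i) satisfy V^{(1)} = ∑_{(i,j) ∈ T*} V_{ij} + min_{i∈S} V_i − ∑_{i∈S} V_i, where T* is the minimum spanning tree with edge costs V_{ij}. -/
open Finset

section Helpers

variable {V : Type*} [Fintype V] [DecidableEq V]

lemma myInjOn (next : V → V) (w : V) (r : V → ℕ)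
    (hr : ∀ i, i ≠ w → r (next i) < r i) :
    Set.InjOn (fun i => s(i, next i)) ↑(({w} : Finset V)ᶜ) := by
  intro i hi j hj h
  simp only [coe_compl, coe_singleton, Set.mem_compl_iff, Set.mem_singleton_iff] at hi hj
  simp only [Sym2.eq, Sym2.rel_iff', Prod.mk.injEq, Prod.swap_prod_mk] at h
  rcases h with ⟨h1, _⟩ | ⟨h1, h2⟩
  · exact h1
  · by_contra hne
    have h3 := hr i hi
    have h4 := hr j hj
    rw [h2] at h3
    rw [← h1] at h4
    omega

lemma myAcyclic (next : V → V) (w : V) (r : V → ℕ)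
    (hr : ∀ i, i ≠ w → r (next i) < r i) :
    (SimpleGraph.fromEdgeSet (((({w} : Finset V)ᶜ).image fun i => s(i, next i)) : Set (Sym2 V))).IsAcyclic := by
  set S : Finset (Sym2 V) := (({w} : Finset V)ᶜ).image fun i => s(i, next i) with hS
  intro v c hc
  set E : Finset (Sym2 V) := c.edges.toFinset with hE
  set A : Finset V := (({w} : Finset V)ᶜ).filter (fun i => s(i, next i) ∈ E) with hA
  -- E = A.image f
  have hEeq : E = A.image fun i => s(i, next i) := by
    apply Finset.Subset.antisymm
    · intro e he
      have he' : e ∈ c.edges := List.mem_toFinset.mp he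
      have heS : e ∈ (SimpleGraph.fromEdgeSet (↑S)).edgeSet := c.edges_subset_edgeSet he'
      rw [SimpleGraph.edgeSet_fromEdgeSet] at heS
      obtain ⟨i, hi, rfl⟩ := Finset.mem_image.mp (Finset.mem_coe.mp heS.1)
      exact Finset.mem_image.mpr ⟨i, Finset.mem_filter.mpr ⟨hi, he⟩, rfl⟩
    · intro e he
      obtain ⟨i, hi, rfl⟩ := Finset.mem_image.mp he
      exact (Finset.mem_filter.mp hi).2
  have hinj := myInjOn next w r hr
  have hAcard : E.card = A.card := by
    rw [hEeq]
    exact Finset.card_image_of_injOn (hinj.mono (by intro x hx; exact (Finset.mem_filter.mp hx).1))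
  have hElen : E.card = c.length := by
    rw [hE, List.toFinset_card_of_nodup hc.edges_nodup, SimpleGraph.Walk.length_edges]
  -- v ∈ c.support.tail
  have hnil := hc.not_nil
  obtain ⟨u, hadj, q, rfl⟩ := SimpleGraph.Walk.not_nil_iff.mp hnil
  have hvtail : v ∈ (SimpleGraph.Walk.cons hadj q).support.tail := by
    rw [SimpleGraph.Walk.support_cons, List.tail_cons]
    exact q.end_mem_support
  set c := SimpleGraph.Walk.cons hadj q
  have hsupp : ∀ x, x ∈ c.support → x ∈ c.support.tail.toFinset := by
    intro x hx
    rw [c.support_eq_cons] at hx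
    rcases List.mem_cons.mp hx with rfl | hx
    · exact List.mem_toFinset.mpr hvtail
    · exact List.mem_toFinset.mpr hx
  have hAsub : A ⊆ c.support.tail.toFinset := by
    intro i hi
    obtain ⟨hi1, hi2⟩ := Finset.mem_filter.mp hi
    exact hsupp i (c.fst_mem_support_of_mem_edges (List.mem_toFinset.mp hi2))
  have htailcard : c.support.tail.toFinset.card ≤ c.length := by
    calc c.support.tail.toFinset.card ≤ c.support.tail.length := List.toFinset_card_le _
    _ = c.length := by rw [List.length_tail, SimpleGraph.Walk.length_support]; omega
  have hAeq : A = c.support.tail.toFinset := by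
    apply Finset.eq_of_subset_of_card_le hAsub
    omega
  -- next maps A to A
  have hnextA : ∀ i ∈ A, next i ∈ A := by
    intro i hi
    obtain ⟨hi1, hi2⟩ := Finset.mem_filter.mp hi
    rw [hAeq]
    exact hsupp _ (c.snd_mem_support_of_mem_edges (List.mem_toFinset.mp hi2))
  have hAne : A.Nonempty := ⟨v, hAeq ▸ List.mem_toFinset.mpr hvtail⟩
  obtain ⟨x, hx, hxmin⟩ := Finset.exists_min_image A r hAne
  have hxw : x ≠ w := by
    have := (Finset.mem_filter.mp hx).1
    simpa using this
  exact absurd (hxmin _ (hnextA x hx)) (by simpa using hr x hxw)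

end Helpers
section Helpers2

variable {V : Type*} [Fintype V] [DecidableEq V]

lemma myReach (G : SimpleGraph V) (next : V → V) (w : V)
    (hadj : ∀ i, i ≠ w → G.Adj i (next i)) :
    ∀ (n : ℕ) (i : V), next^[n] i = w →
      (SimpleGraph.fromEdgeSet (((({w} : Finset V)ᶜ).image fun i => s(i, next i)) : Set (Sym2 V))).Reachable i w := by
  intro n
  induction n with
  | zero => intro i hi; rw [Function.iterate_zero_apply] at hi; subst hi; exact SimpleGraph.Reachable.refl _
  | succ n ih =>
    intro i hi
    by_cases hiw : i = w
    · subst hiw; exact SimpleGraph.Reachable.refl _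
    · have hadj' : (SimpleGraph.fromEdgeSet (((({w} : Finset V)ᶜ).image fun i => s(i, next i)) : Set (Sym2 V))).Adj i (next i) := by
        rw [SimpleGraph.fromEdgeSet_adj]
        exact ⟨Finset.mem_coe.mpr (Finset.mem_image.mpr ⟨i, by simpa using hiw, rfl⟩),
          (hadj i hiw).ne⟩
      rw [Function.iterate_succ_apply] at hi
      exact hadj'.reachable.trans (ih (next i) hi)

lemma myKey [Nonempty V] (G : SimpleGraph V) (Ve : Sym2 V → ℝ) (next : V → V) (w : V) (r : V → ℕ)
    (hr : ∀ i, i ≠ w → r (next i) < r i)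
    (hadj : ∀ i, i ≠ w → G.Adj i (next i))
    (habs : ∀ i, ∃ n, next^[n] i = w) :
    ∃ H : SimpleGraph V, H.IsTree ∧ H ≤ G ∧
      (∑ᶠ e ∈ H.edgeSet, Ve e) = ∑ i ∈ ({w} : Finset V)ᶜ, Ve s(i, next i) := by
  set S : Finset (Sym2 V) := (({w} : Finset V)ᶜ).image fun i => s(i, next i) with hS
  refine ⟨SimpleGraph.fromEdgeSet (S : Set (Sym2 V)), ?_, ?_, ?_⟩
  · rw [SimpleGraph.isTree_iff]
    constructor
    · constructor
      intro a b
      obtain ⟨na, hna⟩ := habs a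
      obtain ⟨nb, hnb⟩ := habs b
      exact (myReach G next w hadj na a hna).trans (myReach G next w hadj nb b hnb).symm
    · exact myAcyclic next w r hr
  · intro a b hab
    rw [SimpleGraph.fromEdgeSet_adj] at hab
    obtain ⟨he, hne⟩ := hab
    obtain ⟨i, hi, heq⟩ := Finset.mem_image.mp (Finset.mem_coe.mp he)
    rw [Sym2.eq_iff] at heq
    rcases heq with ⟨h1, h2⟩ | ⟨h1, h2⟩
    · subst h1; rw [← h2]; exact hadj i (by simpa using hi)
    · subst h1; rw [← h2]; exact (hadj i (by simpa using hi)).symm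
  · have hES : (SimpleGraph.fromEdgeSet (S : Set (Sym2 V))).edgeSet = (S : Set (Sym2 V)) := by
      rw [SimpleGraph.edgeSet_fromEdgeSet]
      ext e
      simp only [Set.mem_diff, Set.mem_setOf_eq, Finset.mem_coe, and_iff_left_iff_imp]
      intro heS hed
      obtain ⟨i, hi, rfl⟩ := Finset.mem_image.mp (Finset.mem_coe.mp heS)
      exact (hadj i (by simpa using hi)).ne (Sym2.mk_isDiag_iff.mp hed)
    rw [hES, finsum_mem_coe_finset, hS]
    exact Finset.sum_image (fun x hx y hy h => myInjOn next w r hr (by simpa using hx) (by simpa using hy) h)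

end Helpers2
section Helpers3

variable {V : Type*} [Fintype V] [DecidableEq V]

noncomputable def parentFn (T : SimpleGraph V) (w : V) (i : V) : V :=
  if h : T.dist i w = 0 then i
  else (SimpleGraph.exists_walk_of_dist_ne_zero h).choose.getVert 1

lemma parentFn_self (T : SimpleGraph V) (w : V) : parentFn T w w = w := by
  simp [parentFn, SimpleGraph.dist_self]

lemma parentFn_spec (T : SimpleGraph V) (hT : T.Connected) (w : V) {i : V} (hi : i ≠ w) :
    T.Adj i (parentFn T w i) ∧ T.dist (parentFn T w i) w < T.dist i w := by
  have h0 : T.dist i w ≠ 0 := (hT.pos_dist_of_ne hi).ne'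
  have hp := (SimpleGraph.exists_walk_of_dist_ne_zero h0).choose_spec
  set p := (SimpleGraph.exists_walk_of_dist_ne_zero h0).choose with hpdef
  have hnil : ¬ p.Nil := by
    rw [SimpleGraph.Walk.not_nil_iff_lt_length, hp]
    omega
  have hpar : parentFn T w i = p.getVert 1 := by
    rw [parentFn, dif_neg h0]
  constructor
  · rw [hpar]; exact p.adj_snd hnil
  · rw [hpar]
    have h1 : T.dist (p.getVert 1) w ≤ p.tail.length := SimpleGraph.dist_le _
    have h2 : p.tail.length + 1 = p.length := SimpleGraph.Walk.length_tail_add_one hnil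
    omega

lemma parentFn_absorb (T : SimpleGraph V) (hT : T.Connected) (w : V) :
    ∀ (n : ℕ) (i : V), T.dist i w ≤ n → (parentFn T w)^[n] i = w := by
  intro n
  induction n with
  | zero =>
    intro i hi
    have : i = w := (hT.dist_eq_zero_iff).mp (Nat.le_zero.mp hi)
    simpa using this
  | succ n ih =>
    intro i hi
    by_cases hiw : i = w
    · rw [hiw]; exact Function.iterate_fixed (parentFn_self T w) _
    · rw [Function.iterate_succ_apply]
      apply ih
      have := (parentFn_spec T hT w hiw).2
      omega

end Helpers3


/-- under the genericness assumption, the optimal value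
`V^{(1)} = min` over `W`-graphs with one sink of `∑_{(i→j)} (V_{ij} − V_i)` equals
`∑_{(i,j) ∈ T*} V_{ij} + min_{i ∈ S} V_i − ∑_{i ∈ S} V_i`, where `T*` is the minimum
spanning tree with edge costs `V_{ij}`. -/
theorem optimal_value_one_sink {V : Type*} [Fintype V] [DecidableEq V] [Nonempty V]
    (G : SimpleGraph V) (hG : G.Connected) (Ve : Sym2 V → ℝ) (Vp : V → ℝ)
    (hgen : Generic G Ve Vp)
    (T : SimpleGraph V) (hT : IsMST G Ve T) :
    IsLeast {x : ℝ | ∃ (W : Finset V) (g : WGraph G W), W.card = 1 ∧ wcost Ve Vp g = x}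
      ((∑ᶠ e ∈ T.edgeSet, Ve e) +
        (Finset.univ.inf' Finset.univ_nonempty Vp) - ∑ i : V, Vp i) := by
  obtain ⟨htree, hle, hmst⟩ := hT
  constructor
  · -- membership: build the W-graph from the MST rooted at the argmin of Vp
    obtain ⟨w, -, hw⟩ := Finset.exists_mem_eq_inf' Finset.univ_nonempty Vp
    have hconn : T.Connected := htree.1
    have habs : ∀ i : V, ∃ n : ℕ, (parentFn T w)^[n] i ∈ ({w} : Finset V) := fun i =>
      ⟨T.dist i w, by
        rw [parentFn_absorb T hconn w (T.dist i w) i le_rfl]; exact Finset.mem_singleton_self w⟩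
    refine ⟨{w}, ⟨parentFn T w, ?_, ?_, habs⟩, Finset.card_singleton w, ?_⟩
    · intro i hi
      exact hle (parentFn_spec T hconn w (by simpa using hi)).1
    · intro i hi
      rw [Finset.mem_singleton] at hi
      rw [hi]; exact parentFn_self T w
    · -- cost computation
      have hr : ∀ i, i ≠ w → (fun j => T.dist j w) (parentFn T w i) < (fun j => T.dist j w) i :=
        fun i hi => (parentFn_spec T hconn w hi).2
      have hinj := myInjOn (parentFn T w) w (fun j => T.dist j w) hr
      letI : Fintype T.edgeSet := Fintype.ofFinite _
      set S : Finset (Sym2 V) := (({w} : Finset V)ᶜ).image fun i => s(i, parentFn T w i) with hS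
      have hsub : S ⊆ T.edgeFinset := by
        intro e he
        obtain ⟨i, hi, rfl⟩ := Finset.mem_image.mp he
        rw [SimpleGraph.mem_edgeFinset, SimpleGraph.mem_edgeSet]
        exact (parentFn_spec T hconn w (by simpa using hi)).1
      have hScard : S.card = Fintype.card V - 1 := by
        rw [hS, Finset.card_image_of_injOn hinj, Finset.card_compl, Finset.card_singleton]
      have hTcard := htree.card_edgeFinset
      have hEq : T.edgeFinset = S := by
        refine (Finset.eq_of_subset_of_card_le hsub ?_).symm
        have : 0 < Fintype.card V := Fintype.card_pos
        omega
      have hsum1 : (∑ᶠ e ∈ T.edgeSet, Ve e) = ∑ i ∈ ({w} : Finset V)ᶜ, Ve s(i, parentFn T w i) := by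
        rw [← SimpleGraph.coe_edgeFinset, finsum_mem_coe_finset, hEq, hS]
        exact Finset.sum_image fun x hx y hy h => hinj (by simpa using hx) (by simpa using hy) h
      have hsum2 : ∑ i ∈ ({w} : Finset V)ᶜ, Vp i = (∑ i : V, Vp i) - Vp w := by
        have := Finset.sum_compl_add_sum ({w} : Finset V) Vp
        rw [Finset.sum_singleton] at this
        linarith
      rw [wcost, Finset.sum_sub_distrib, hsum2, ← hsum1, ← hw]
      ring
  · -- lower bound
    rintro x ⟨W, g, hW1, rfl⟩
    obtain ⟨w', rfl⟩ := Finset.card_eq_one.mp hW1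
    have habs' : ∀ i : V, ∃ n : ℕ, g.next^[n] i = w' := fun i => by
      obtain ⟨n, hn⟩ := g.absorbed i
      exact ⟨n, Finset.mem_singleton.mp hn⟩
    have hr : ∀ i, i ≠ w' →
        (fun j => Nat.find (habs' j)) (g.next i) < (fun j => Nat.find (habs' j)) i := by
      intro i hi
      have hspec := Nat.find_spec (habs' i)
      have hpos : Nat.find (habs' i) ≠ 0 := by
        intro h
        rw [h, Function.iterate_zero_apply] at hspec
        exact hi hspec
      have h2 : g.next^[Nat.find (habs' i) - 1] (g.next i) = w' := by
        rw [← Function.iterate_succ_apply, Nat.succ_eq_add_one, Nat.sub_add_cancel (Nat.one_le_iff_ne_zero.mpr hpos)]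
        exact hspec
      have := Nat.find_le (h := habs' (g.next i)) h2
      simp only
      omega
    have hadj : ∀ i, i ≠ w' → G.Adj i (g.next i) := fun i hi =>
      g.adj_of_not_sink i (by simpa using hi)
    obtain ⟨H, htree', hle', hsum⟩ := myKey G Ve g.next w' (fun j => Nat.find (habs' j)) hr hadj habs'
    have hmst' := hmst H htree' hle'
    rw [hsum] at hmst'
    have hsum2 : ∑ i ∈ ({w'} : Finset V)ᶜ, Vp i = (∑ i : V, Vp i) - Vp w' := by
      have := Finset.sum_compl_add_sum ({w'} : Finset V) Vp
      rw [Finset.sum_singleton] at this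
      linarith
    have hinf : Finset.univ.inf' Finset.univ_nonempty Vp ≤ Vp w' :=
      Finset.inf'_le Vp (Finset.mem_univ w')
    rw [wcost, Finset.sum_sub_distrib, hsum2]
    linarith
end

section
/- Under the genericness assumption, the optimal values satisfy the recurrence V^{(k+1)} = V^{(k)} − max over triples (t, (p,q), i) of (V_{pq} − V_i), where t ranges over connected components of the optimal forest T*_k, (p,q) over edges of t whose removal splits t into t' (containing the sink of t) and t'', and i over states of t''. -/
open Finset

section Aux

variable {V : Type*} [DecidableEq V] {G : SimpleGraph V} {W : Finset V}

open scoped Classical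

omit [DecidableEq V] in
lemma sink_iter (g : WGraph G W) {z : V} (hz : z ∈ W) : ∀ c, g.next^[c] z = z := by
  intro c
  induction c with
  | zero => rfl
  | succ c ih => rw [Function.iterate_succ_apply, g.sink_fixed z hz, ih]

noncomputable def ghit (g : WGraph G W) (z : V) : ℕ := Nat.find (g.absorbed z)

lemma ghit_spec (g : WGraph G W) (z : V) : g.next^[ghit g z] z ∈ W := Nat.find_spec (g.absorbed z)

lemma ghit_min (g : WGraph G W) {z : V} {j : ℕ} (h : j < ghit g z) : g.next^[j] z ∉ W :=
  Nat.find_min (g.absorbed z) h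

noncomputable def gsink (g : WGraph G W) (z : V) : V := g.next^[ghit g z] z

lemma gsink_mem (g : WGraph G W) (z : V) : gsink g z ∈ W := ghit_spec g z

lemma ghit_eq_of (g : WGraph G W) {z : V} {n : ℕ} (h1 : g.next^[n] z ∈ W)
    (h2 : ∀ j < n, g.next^[j] z ∉ W) : ghit g z = n := by
  refine le_antisymm (Nat.find_le h1) ?_
  by_contra h
  exact h2 _ (Nat.lt_of_not_le h) (ghit_spec g z)

lemma ghit_of_mem (g : WGraph G W) {z : V} (hz : z ∈ W) : ghit g z = 0 :=
  ghit_eq_of g hz (by omega)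

lemma gsink_of_mem (g : WGraph G W) {z : V} (hz : z ∈ W) : gsink g z = z := by
  rw [gsink, ghit_of_mem g hz]; rfl

lemma gsink_shift (g : WGraph G W) {z : V} {j : ℕ} (h : j ≤ ghit g z) :
    gsink g (g.next^[j] z) = gsink g z := by
  have hh : ghit g (g.next^[j] z) = ghit g z - j := by
    refine ghit_eq_of g ?_ ?_
    · rw [← Function.iterate_add_apply, Nat.sub_add_cancel h]
      exact ghit_spec g z
    · intro l hl
      rw [← Function.iterate_add_apply]
      exact ghit_min g (by omega)
  rw [gsink, hh, ← Function.iterate_add_apply, Nat.sub_add_cancel h]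
  rfl

/-- Points along a trajectory that avoids `W` up to step `n` are pairwise distinct. -/
lemma iter_inj (g : WGraph G W) {i : V} {n : ℕ} (hW : ∀ j < n, g.next^[j] i ∉ W) :
    ∀ {j l : ℕ}, j ≤ n → l ≤ n → g.next^[j] i = g.next^[l] i → j = l := by
  have key : ∀ j l, j < l → l ≤ n → g.next^[j] i = g.next^[l] i → False := by
    intro j l hjl hln heq
    have cyc : ∀ M, ∃ c, j ≤ c ∧ c < l ∧ g.next^[j + M] i = g.next^[c] i := by
      intro M
      induction M with
      | zero => exact ⟨j, le_refl j, hjl, rfl⟩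
      | succ M ih =>
        obtain ⟨c, hc1, hc2, hc3⟩ := ih
        by_cases hcl : c + 1 < l
        · refine ⟨c + 1, by omega, hcl, ?_⟩
          rw [← Nat.add_assoc, Function.iterate_succ_apply', hc3]
          exact (Function.iterate_succ_apply' g.next c i).symm
        · have hceq : c + 1 = l := by omega
          refine ⟨j, le_refl j, hjl, ?_⟩
          rw [← Nat.add_assoc, Function.iterate_succ_apply', hc3, heq, ← hceq]
          exact (Function.iterate_succ_apply' g.next c i).symm
    have hm := ghit_spec g i
    by_cases hmj : ghit g i < j
    · exact hW (ghit g i) (by omega) hm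
    · obtain ⟨c, hc1, hc2, hc3⟩ := cyc (ghit g i - j)
      rw [Nat.add_sub_cancel' (by omega)] at hc3
      rw [hc3] at hm
      exact hW c (by omega) hm
  intro j l hj hl heq
  rcases lt_trichotomy j l with h | h | h
  · exact absurd heq (fun e => key j l h hl e)
  · exact h
  · exact absurd heq.symm (fun e => key l j h hj e)


/-- Redirected next-map: reverse the trajectory of `i` up to step `n`, give `i` the
target `o.getD i`, keep everything else. -/
noncomputable def rnext (g : WGraph G W) (i : V) (n : ℕ) (o : Option V) : V → V := fun z =>
  if hz : ∃ j, j < n ∧ g.next^[j + 1] i = z then g.next^[Nat.find hz] i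
  else if z = i then o.getD i else g.next z

variable (g : WGraph G W) (i : V) (n : ℕ) (o : Option V)

lemma rnext_path (hW : ∀ j < n, g.next^[j] i ∉ W) {j : ℕ} (hj : j < n) :
    rnext g i n o (g.next^[j + 1] i) = g.next^[j] i := by
  have hz : ∃ j', j' < n ∧ g.next^[j' + 1] i = g.next^[j + 1] i := ⟨j, hj, rfl⟩
  rw [rnext, dif_pos hz]
  obtain ⟨h1, h2⟩ := Nat.find_spec hz
  have := iter_inj g hW (by omega : Nat.find hz + 1 ≤ n) (by omega : j + 1 ≤ n) h2
  have : Nat.find hz = j := by omega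
  rw [this]

lemma rnext_start (hW : ∀ j < n, g.next^[j] i ∉ W) : rnext g i n o i = o.getD i := by
  have hz : ¬ ∃ j, j < n ∧ g.next^[j + 1] i = i := by
    rintro ⟨j, hj, he⟩
    have : j + 1 = 0 := iter_inj g hW (by omega) (by omega) he
    omega
  rw [rnext, dif_neg hz, if_pos rfl]

lemma rnext_off {z : V} (hz : ∀ l ≤ n, g.next^[l] i ≠ z) : rnext g i n o z = g.next z := by
  have h1 : ¬ ∃ j, j < n ∧ g.next^[j + 1] i = z := by
    rintro ⟨j, hj, he⟩
    exact hz (j + 1) (by omega) he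
  have h2 : z ≠ i := fun e => hz 0 (by omega) e.symm
  rw [rnext, dif_neg h1, if_neg h2]

lemma rnext_desc (hW : ∀ j < n, g.next^[j] i ∉ W) :
    ∀ j ≤ n, (rnext g i n o)^[j] (g.next^[j] i) = i := by
  intro j
  induction j with
  | zero => intro _; rfl
  | succ j ih =>
    intro hj
    rw [Function.iterate_succ_apply, rnext_path g i n o hW (by omega)]
    exact ih (by omega)

lemma rnext_follow (z : V) (m : ℕ)
    (h : ∀ j < m, ∀ l ≤ n, g.next^[l] i ≠ g.next^[j] z) :
    (rnext g i n o)^[m] z = g.next^[m] z := by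
  induction m with
  | zero => rfl
  | succ m ih =>
    rw [Function.iterate_succ_apply', Function.iterate_succ_apply',
      ih (fun j hj => h j (by omega)),
      rnext_off g i n o (fun l hl => h m (by omega) l hl)]

lemma rnext_core (hW : ∀ j < n, g.next^[j] i ∉ W) (z : V) :
    ∃ m, (rnext g i n o)^[m] z = i ∨
      ((rnext g i n o)^[m] z ∈ W ∧ ∀ l ≤ n, (rnext g i n o)^[m] z ≠ g.next^[l] i) := by
  have hP : ∃ m, g.next^[m] z ∈ W ∨ ∃ l, l ≤ n ∧ g.next^[l] i = g.next^[m] z :=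
    ⟨ghit g z, Or.inl (ghit_spec g z)⟩
  set m₀ := Nat.find hP with hm₀
  have hfollow : (rnext g i n o)^[m₀] z = g.next^[m₀] z := by
    refine rnext_follow g i n o z m₀ ?_
    intro j hj l hl he
    exact Nat.find_min hP hj (Or.inr ⟨l, hl, he⟩)
  by_cases hex : ∃ l, l ≤ n ∧ g.next^[l] i = g.next^[m₀] z
  · obtain ⟨l, hl, he⟩ := hex
    refine ⟨m₀ + l, Or.inl ?_⟩
    rw [Nat.add_comm, Function.iterate_add_apply, hfollow, ← he]
    exact rnext_desc g i n o hW l hl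
  · refine ⟨m₀, Or.inr ⟨?_, ?_⟩⟩
    · rcases Nat.find_spec hP with h | h
      · rwa [hfollow]
      · exact absurd h hex
    · intro l hl he
      rw [hfollow] at he
      exact hex ⟨l, hl, he.symm⟩

/-- Splitting: make `i` a new sink, reversing its trajectory up to step `n`;
the arrow out of `p = g.next^[n] i` is deleted. -/
noncomputable def splitG (hW : ∀ j ≤ n, g.next^[j] i ∉ W) :
    WGraph G (insert i W) where
  next := rnext g i n none
  adj_of_not_sink := by
    intro z hz
    rw [Finset.mem_insert, not_or] at hz
    obtain ⟨hzi, hzW⟩ := hz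
    by_cases hS : ∃ l, l ≤ n ∧ g.next^[l] i = z
    · obtain ⟨l, hl, he⟩ := hS
      have hl0 : l ≠ 0 := by rintro rfl; exact hzi he.symm
      obtain ⟨l', rfl⟩ := Nat.exists_eq_succ_of_ne_zero hl0
      rw [← he, rnext_path g i n none (fun j hj => hW j (by omega)) (by omega)]
      have := g.adj_of_not_sink _ (hW l' (by omega))
      rw [← Function.iterate_succ_apply' g.next l' i] at this
      exact this.symm
    · push_neg at hS
      rw [rnext_off g i n none hS]
      exact g.adj_of_not_sink z hzW
  sink_fixed := by
    intro z hz
    rcases Finset.mem_insert.mp hz with h | hzW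
    · rw [h, rnext_start g i n none (fun j hj => hW j (by omega))]; rfl
    · rw [rnext_off g i n none (fun l hl he => hW l hl (he ▸ hzW))]
      exact g.sink_fixed z hzW
  absorbed := by
    intro z
    obtain ⟨m, hm⟩ := rnext_core g i n none (fun j hj => hW j (by omega)) z
    refine ⟨m, ?_⟩
    rcases hm with h | ⟨h, _⟩
    · rw [h]; exact Finset.mem_insert_self _ _
    · exact Finset.mem_insert_of_mem h

/-- Root swap: `i` becomes a sink in place of its old sink, reversing the whole
trajectory of `i`. Here `n` should be `ghit g i`. -/
noncomputable def swapG (hW : ∀ j < n, g.next^[j] i ∉ W) (hs : g.next^[n] i ∈ W) :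
    WGraph G (insert i (W.erase (g.next^[n] i))) where
  next := rnext g i n none
  adj_of_not_sink := by
    intro z hz
    rw [Finset.mem_insert, not_or, Finset.mem_erase, not_and_or, not_not] at hz
    obtain ⟨hzi, hzW⟩ := hz
    by_cases hS : ∃ l, l ≤ n ∧ g.next^[l] i = z
    · obtain ⟨l, hl, he⟩ := hS
      have hl0 : l ≠ 0 := by rintro rfl; exact hzi he.symm
      obtain ⟨l', rfl⟩ := Nat.exists_eq_succ_of_ne_zero hl0
      rw [← he, rnext_path g i n none hW (by omega)]
      have := g.adj_of_not_sink _ (hW l' (by omega))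
      rw [← Function.iterate_succ_apply' g.next l' i] at this
      exact this.symm
    · push_neg at hS
      rw [rnext_off g i n none hS]
      refine g.adj_of_not_sink z ?_
      rcases hzW with h | h
      · exact absurd h.symm (hS n (le_refl n))
      · exact h
  sink_fixed := by
    intro z hz
    rcases Finset.mem_insert.mp hz with h | hzW
    · rw [h, rnext_start g i n none hW]; rfl
    · rw [Finset.mem_erase] at hzW
      have hoff : ∀ l ≤ n, g.next^[l] i ≠ z := by
        intro l hl he
        rcases Nat.lt_or_ge l n with h | h
        · exact hW l h (he ▸ hzW.2)
        · have hln : l = n := by omega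
          exact hzW.1 (by rw [← he, hln])
      rw [rnext_off g i n none hoff]
      exact g.sink_fixed z hzW.2
  absorbed := by
    intro z
    obtain ⟨m, hm⟩ := rnext_core g i n none hW z
    refine ⟨m, ?_⟩
    rcases hm with h | ⟨h, h2⟩
    · rw [h]; exact Finset.mem_insert_self _ _
    · exact Finset.mem_insert_of_mem (Finset.mem_erase.mpr ⟨h2 n (le_refl n), h⟩)

/-- Merging: the sink `s = g.next^[n] i` of `i` stops being a sink; the trajectory of
`i` is reversed and `i` gets the arrow to `b`, which lies in the basin of another sink. -/
noncomputable def mergeG (b : V) (hW : ∀ j < n, g.next^[j] i ∉ W) (hs : g.next^[n] i ∈ W)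
    (hadj : G.Adj i b) (hb : gsink g b ≠ g.next^[n] i) :
    WGraph G (W.erase (g.next^[n] i)) where
  next := rnext g i n (some b)
  adj_of_not_sink := by
    intro z hz
    rw [Finset.mem_erase, not_and_or, not_not] at hz
    by_cases hS : ∃ l, l ≤ n ∧ g.next^[l] i = z
    · obtain ⟨l, hl, he⟩ := hS
      rcases Nat.eq_zero_or_pos l with rfl | hl0
      · simp only [Function.iterate_zero_apply] at he
        rw [← he, rnext_start g i n (some b) hW]
        exact he ▸ hadj
      · obtain ⟨l', rfl⟩ := Nat.exists_eq_succ_of_ne_zero (by omega : l ≠ 0)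
        rw [← he, rnext_path g i n (some b) hW (by omega)]
        have := g.adj_of_not_sink _ (hW l' (by omega))
        rw [← Function.iterate_succ_apply' g.next l' i] at this
        exact this.symm
    · push_neg at hS
      rw [rnext_off g i n (some b) hS]
      refine g.adj_of_not_sink z ?_
      rcases hz with h | h
      · exact absurd h.symm (hS n (le_refl n))
      · exact h
  sink_fixed := by
    intro z hz
    rw [Finset.mem_erase] at hz
    have hoff : ∀ l ≤ n, g.next^[l] i ≠ z := by
      intro l hl he
      rcases Nat.lt_or_ge l n with h | h
      · exact hW l h (he ▸ hz.2)
      · have hln : l = n := by omega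
        exact hz.1 (by rw [← he, hln])
    rw [rnext_off g i n (some b) hoff]
    exact g.sink_fixed z hz.2
  absorbed := by
    intro z
    have hghit : ghit g i = n := ghit_eq_of g hs hW
    have hsinkl : ∀ l ≤ n, gsink g (g.next^[l] i) = g.next^[n] i := by
      intro l hl
      rw [gsink_shift g (hghit ▸ hl), gsink, hghit]
    have hboff : ∀ j < ghit g b, ∀ l ≤ n, g.next^[l] i ≠ g.next^[j] b := by
      intro j hj l hl he
      have h1 : gsink g (g.next^[j] b) = gsink g b := gsink_shift g (by omega)
      rw [← he, hsinkl l hl] at h1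
      exact hb h1.symm
    obtain ⟨m, hm⟩ := rnext_core g i n (some b) hW z
    rcases hm with h | ⟨h, h2⟩
    · refine ⟨ghit g b + (m + 1), ?_⟩
      rw [Function.iterate_add_apply, Function.iterate_succ_apply', h,
        rnext_start g i n (some b) hW]
      have : (Option.some b).getD i = b := rfl
      rw [this, rnext_follow g i n (some b) b (ghit g b) hboff]
      refine Finset.mem_erase.mpr ⟨hb, gsink_mem g b⟩
    · exact ⟨m, Finset.mem_erase.mpr ⟨h2 n (le_refl n), h⟩⟩

@[simp] lemma splitG_next (hW : ∀ j ≤ n, g.next^[j] i ∉ W) :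
    (splitG g i n hW).next = rnext g i n none := rfl

@[simp] lemma swapG_next (hW : ∀ j < n, g.next^[j] i ∉ W) (hs : g.next^[n] i ∈ W) :
    (swapG g i n hW hs).next = rnext g i n none := rfl

@[simp] lemma mergeG_next (b : V) (hW : ∀ j < n, g.next^[j] i ∉ W) (hs : g.next^[n] i ∈ W)
    (hadj : G.Adj i b) (hb : gsink g b ≠ g.next^[n] i) :
    (mergeG g i n b hW hs hadj hb).next = rnext g i n (some b) := rfl

section Cost

variable [Fintype V] (Ve : Sym2 V → ℝ) (Vp : V → ℝ)

lemma wcost_splitG (hW : ∀ j ≤ n, g.next^[j] i ∉ W) :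
    wcost Ve Vp (splitG g i n hW) =
      wcost Ve Vp g - (Ve s(g.next^[n] i, g.next (g.next^[n] i)) - Vp i) := by
  have hW' : ∀ j < n, g.next^[j] i ∉ W := fun j hj => hW j (le_of_lt hj)
  set SF : Finset V := (Finset.range (n + 1)).image (fun j => g.next^[j] i) with hSFdef
  have hmem : ∀ z, z ∈ SF ↔ ∃ l, l ≤ n ∧ g.next^[l] i = z := by
    intro z; simp [hSFdef, Nat.lt_succ_iff]
  have hiSF : i ∈ SF := (hmem i).mpr ⟨0, by omega, rfl⟩
  have hSFW : SF ⊆ Wᶜ := by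
    intro z hz
    obtain ⟨l, hl, he⟩ := (hmem z).mp hz
    exact Finset.mem_compl.mpr (he ▸ hW l hl)
  have hcompl : (insert i W)ᶜ = Wᶜ.erase i := by
    ext z
    simp only [Finset.mem_compl, Finset.mem_insert, Finset.mem_erase, not_or]
  have hsplit2 : Wᶜ.erase i = (Wᶜ \ SF) ∪ SF.erase i := by
    ext z
    simp only [Finset.mem_erase, Finset.mem_union, Finset.mem_sdiff, Finset.mem_compl]
    constructor
    · rintro ⟨hzi, hzW⟩
      by_cases hzS : z ∈ SF
      · exact Or.inr ⟨hzi, hzS⟩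
      · exact Or.inl ⟨hzW, hzS⟩
    · rintro (⟨hzW, hzS⟩ | ⟨hzi, hzS⟩)
      · exact ⟨fun e => hzS (e ▸ hiSF), hzW⟩
      · exact ⟨hzi, Finset.mem_compl.mp (hSFW hzS)⟩
  have herase : SF.erase i = (Finset.range n).image (fun j => g.next^[j + 1] i) := by
    ext z
    constructor
    · intro hz
      obtain ⟨hzi, hzS⟩ := Finset.mem_erase.mp hz
      obtain ⟨l, hl, he⟩ := (hmem z).mp hzS
      have hl0 : l ≠ 0 := by
        rintro rfl
        exact hzi he.symm
      refine Finset.mem_image.mpr ⟨l - 1, Finset.mem_range.mpr (by omega), ?_⟩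
      rw [Nat.sub_add_cancel (by omega)]
      exact he
    · intro hz
      obtain ⟨j, hj, he⟩ := Finset.mem_image.mp hz
      have hj' : j < n := Finset.mem_range.mp hj
      refine Finset.mem_erase.mpr ⟨?_, (hmem z).mpr ⟨j + 1, by omega, he⟩⟩
      intro e
      have : j + 1 = 0 := iter_inj g hW' (by omega) (by omega) (by rw [he, e]; rfl)
      omega
  have hdisj : Disjoint (Wᶜ \ SF) SF := Finset.sdiff_disjoint
  have hdisj2 : Disjoint (Wᶜ \ SF) (SF.erase i) := hdisj.mono_right (Finset.erase_subset _ _)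
  have hWceq : Wᶜ = (Wᶜ \ SF) ∪ SF := (Finset.sdiff_union_of_subset hSFW).symm
  have hoff : ∀ z ∈ Wᶜ \ SF, Ve s(z, rnext g i n none z) - Vp z = Ve s(z, g.next z) - Vp z := by
    intro z hz
    rw [rnext_off g i n none
      (fun l hl he => (Finset.mem_sdiff.mp hz).2 ((hmem z).mpr ⟨l, hl, he⟩))]
  have hinj1 : ∀ a ∈ Finset.range (n + 1), ∀ b ∈ Finset.range (n + 1),
      g.next^[a] i = g.next^[b] i → a = b := by
    intro a ha b hb he
    exact iter_inj g hW' (Nat.lt_succ_iff.mp (Finset.mem_range.mp ha))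
      (Nat.lt_succ_iff.mp (Finset.mem_range.mp hb)) he
  have hinj2 : ∀ a ∈ Finset.range n, ∀ b ∈ Finset.range n,
      g.next^[a + 1] i = g.next^[b + 1] i → a = b := by
    intro a ha b hb he
    have := iter_inj g hW' (Nat.succ_le_of_lt (Finset.mem_range.mp ha))
      (Nat.succ_le_of_lt (Finset.mem_range.mp hb)) he
    omega
  have e1 : wcost Ve Vp (splitG g i n hW) =
      (∑ z ∈ Wᶜ \ SF, (Ve s(z, g.next z) - Vp z)) +
        ∑ j ∈ Finset.range n, (Ve s(g.next^[j] i, g.next^[j + 1] i) - Vp (g.next^[j + 1] i)) := by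
    rw [wcost]
    simp only [splitG_next]
    rw [hcompl, hsplit2, Finset.sum_union hdisj2]
    congr 1
    · exact Finset.sum_congr rfl hoff
    · rw [herase, Finset.sum_image hinj2]
      refine Finset.sum_congr rfl ?_
      intro j hj
      rw [rnext_path g i n none hW' (Finset.mem_range.mp hj), Sym2.eq_swap]
  have e2 : wcost Ve Vp g =
      (∑ z ∈ Wᶜ \ SF, (Ve s(z, g.next z) - Vp z)) +
        ∑ j ∈ Finset.range (n + 1), (Ve s(g.next^[j] i, g.next^[j + 1] i) - Vp (g.next^[j] i)) := by
    rw [wcost]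
    conv_lhs => rw [hWceq]
    rw [Finset.sum_union hdisj]
    congr 1
    rw [hSFdef, Finset.sum_image hinj1]
    refine Finset.sum_congr rfl ?_
    intro j hj
    rw [← Function.iterate_succ_apply' g.next j i]
  rw [e1, e2]
  have htel : ∑ j ∈ Finset.range n, (Vp (g.next^[j] i) - Vp (g.next^[j + 1] i)) =
      Vp (g.next^[0] i) - Vp (g.next^[n] i) :=
    Finset.sum_range_sub' (fun j => Vp (g.next^[j] i)) n
  have hre : ∑ j ∈ Finset.range n, (Ve s(g.next^[j] i, g.next^[j + 1] i) - Vp (g.next^[j + 1] i)) =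
      ∑ j ∈ Finset.range n, ((Ve s(g.next^[j] i, g.next^[j + 1] i) - Vp (g.next^[j] i)) +
        (Vp (g.next^[j] i) - Vp (g.next^[j + 1] i))) := by
    refine Finset.sum_congr rfl ?_
    intros; ring
  rw [hre, Finset.sum_add_distrib, htel, Finset.sum_range_succ]
  rw [Function.iterate_succ_apply' g.next n i]
  simp only [Function.iterate_zero_apply]
  ring

lemma wcost_swapG (hiW : i ∉ W) (hW : ∀ j < n, g.next^[j] i ∉ W) (hs : g.next^[n] i ∈ W) :
    wcost Ve Vp (swapG g i n hW hs) = wcost Ve Vp g + Vp i - Vp (g.next^[n] i) := by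
  have hn0 : n ≠ 0 := by
    rintro rfl
    exact hiW hs
  set SF : Finset V := (Finset.range (n + 1)).image (fun j => g.next^[j] i) with hSFdef
  have hmem : ∀ z, z ∈ SF ↔ ∃ l, l ≤ n ∧ g.next^[l] i = z := by
    intro z; simp [hSFdef, Nat.lt_succ_iff]
  have hiSF : i ∈ SF := (hmem i).mpr ⟨0, by omega, rfl⟩
  have hWceq : Wᶜ = (Wᶜ \ SF) ∪ (Finset.range n).image (fun j => g.next^[j] i) := by
    ext z
    simp only [Finset.mem_union, Finset.mem_sdiff, Finset.mem_compl, Finset.mem_image,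
      Finset.mem_range]
    constructor
    · intro hzW
      by_cases hzS : z ∈ SF
      · obtain ⟨l, hl, he⟩ := (hmem z).mp hzS
        have hln : l ≠ n := by rintro rfl; exact hzW (he ▸ hs)
        exact Or.inr ⟨l, by omega, he⟩
      · exact Or.inl ⟨hzW, hzS⟩
    · rintro (⟨hzW, _⟩ | ⟨l, hl, he⟩)
      · exact hzW
      · exact he ▸ hW l hl
  have hsub1 : (Finset.range n).image (fun j => g.next^[j] i) ⊆ SF := by
    intro z hz
    obtain ⟨l, hl, he⟩ := Finset.mem_image.mp hz
    have hl' := Finset.mem_range.mp hl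
    exact (hmem z).mpr ⟨l, by omega, he⟩
  have hsub2 : (Finset.range n).image (fun j => g.next^[j + 1] i) ⊆ SF := by
    intro z hz
    obtain ⟨l, hl, he⟩ := Finset.mem_image.mp hz
    have hl' := Finset.mem_range.mp hl
    exact (hmem z).mpr ⟨l + 1, by omega, he⟩
  have hdisj : Disjoint (Wᶜ \ SF) SF := Finset.sdiff_disjoint
  have hdisj1 : Disjoint (Wᶜ \ SF) ((Finset.range n).image (fun j => g.next^[j] i)) :=
    hdisj.mono_right hsub1
  have hdisj2 : Disjoint (Wᶜ \ SF) ((Finset.range n).image (fun j => g.next^[j + 1] i)) :=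
    hdisj.mono_right hsub2
  have hcompl : (insert i (W.erase (g.next^[n] i)))ᶜ =
      (Wᶜ \ SF) ∪ (Finset.range n).image (fun j => g.next^[j + 1] i) := by
    ext z
    simp only [Finset.mem_compl, Finset.mem_insert, Finset.mem_erase, Finset.mem_union,
      Finset.mem_sdiff, Finset.mem_compl, Finset.mem_image, Finset.mem_range, not_or, not_and]
    constructor
    · rintro ⟨hzi, hzE⟩
      by_cases hzn : z = g.next^[n] i
      · refine Or.inr ⟨n - 1, by omega, ?_⟩
        rw [Nat.sub_add_cancel (by omega)]
        exact hzn.symm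
      · have hzW : z ∉ W := hzE hzn
        by_cases hzS : z ∈ SF
        · obtain ⟨l, hl, he⟩ := (hmem z).mp hzS
          have hl0 : l ≠ 0 := by rintro rfl; exact hzi he.symm
          have hln : l ≠ n := fun e => hzn (by rw [← he, e])
          refine Or.inr ⟨l - 1, by omega, ?_⟩
          rw [Nat.sub_add_cancel (by omega)]
          exact he
        · exact Or.inl ⟨hzW, hzS⟩
    · rintro (⟨hzW, hzS⟩ | ⟨j, hj, he⟩)
      · exact ⟨fun e => hzS (e ▸ hiSF), fun _ => hzW⟩
      · constructor
        · intro e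
          have : j + 1 = 0 := iter_inj g hW (by omega) (by omega) (by rw [he, e]; rfl)
          omega
        · intro hne hw
          rcases Nat.lt_or_ge (j + 1) n with h | h
          · exact hW (j + 1) h (he ▸ hw)
          · have : j + 1 = n := by omega
            exact hne (by rw [← he, this])
  have hoff : ∀ z ∈ Wᶜ \ SF, Ve s(z, rnext g i n none z) - Vp z = Ve s(z, g.next z) - Vp z := by
    intro z hz
    rw [rnext_off g i n none
      (fun l hl he => (Finset.mem_sdiff.mp hz).2 ((hmem z).mpr ⟨l, hl, he⟩))]
  have hinj1 : ∀ a ∈ Finset.range n, ∀ b ∈ Finset.range n,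
      g.next^[a] i = g.next^[b] i → a = b := by
    intro a ha b hb he
    exact iter_inj g hW (le_of_lt (Finset.mem_range.mp ha))
      (le_of_lt (Finset.mem_range.mp hb)) he
  have hinj2 : ∀ a ∈ Finset.range n, ∀ b ∈ Finset.range n,
      g.next^[a + 1] i = g.next^[b + 1] i → a = b := by
    intro a ha b hb he
    have := iter_inj g hW (Nat.succ_le_of_lt (Finset.mem_range.mp ha))
      (Nat.succ_le_of_lt (Finset.mem_range.mp hb)) he
    omega
  have e1 : wcost Ve Vp (swapG g i n hW hs) =
      (∑ z ∈ Wᶜ \ SF, (Ve s(z, g.next z) - Vp z)) +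
        ∑ j ∈ Finset.range n, (Ve s(g.next^[j] i, g.next^[j + 1] i) - Vp (g.next^[j + 1] i)) := by
    rw [wcost]
    simp only [swapG_next]
    rw [hcompl, Finset.sum_union hdisj2]
    congr 1
    · exact Finset.sum_congr rfl hoff
    · rw [Finset.sum_image hinj2]
      refine Finset.sum_congr rfl ?_
      intro j hj
      rw [rnext_path g i n none hW (Finset.mem_range.mp hj), Sym2.eq_swap]
  have e2 : wcost Ve Vp g =
      (∑ z ∈ Wᶜ \ SF, (Ve s(z, g.next z) - Vp z)) +
        ∑ j ∈ Finset.range n, (Ve s(g.next^[j] i, g.next^[j + 1] i) - Vp (g.next^[j] i)) := by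
    rw [wcost]
    conv_lhs => rw [hWceq]
    rw [Finset.sum_union hdisj1]
    congr 1
    rw [Finset.sum_image hinj1]
    refine Finset.sum_congr rfl ?_
    intro j hj
    rw [← Function.iterate_succ_apply' g.next j i]
  rw [e1, e2]
  have htel : ∑ j ∈ Finset.range n, (Vp (g.next^[j] i) - Vp (g.next^[j + 1] i)) =
      Vp (g.next^[0] i) - Vp (g.next^[n] i) :=
    Finset.sum_range_sub' (fun j => Vp (g.next^[j] i)) n
  have hre : ∑ j ∈ Finset.range n, (Ve s(g.next^[j] i, g.next^[j + 1] i) - Vp (g.next^[j + 1] i)) =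
      ∑ j ∈ Finset.range n, ((Ve s(g.next^[j] i, g.next^[j + 1] i) - Vp (g.next^[j] i)) +
        (Vp (g.next^[j] i) - Vp (g.next^[j + 1] i))) := by
    refine Finset.sum_congr rfl ?_
    intros; ring
  rw [hre, Finset.sum_add_distrib, htel]
  simp only [Function.iterate_zero_apply]
  ring

lemma wcost_mergeG (b : V) (hW : ∀ j < n, g.next^[j] i ∉ W) (hs : g.next^[n] i ∈ W)
    (hadj : G.Adj i b) (hb : gsink g b ≠ g.next^[n] i) :
    wcost Ve Vp (mergeG g i n b hW hs hadj hb) =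
      wcost Ve Vp g + (Ve s(i, b) - Vp (g.next^[n] i)) := by
  set SF : Finset V := (Finset.range (n + 1)).image (fun j => g.next^[j] i) with hSFdef
  have hmem : ∀ z, z ∈ SF ↔ ∃ l, l ≤ n ∧ g.next^[l] i = z := by
    intro z; simp [hSFdef, Nat.lt_succ_iff]
  have hiSF : i ∈ SF := (hmem i).mpr ⟨0, by omega, rfl⟩
  have hWceq : Wᶜ = (Wᶜ \ SF) ∪ (Finset.range n).image (fun j => g.next^[j] i) := by
    ext z
    simp only [Finset.mem_union, Finset.mem_sdiff, Finset.mem_compl, Finset.mem_image,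
      Finset.mem_range]
    constructor
    · intro hzW
      by_cases hzS : z ∈ SF
      · obtain ⟨l, hl, he⟩ := (hmem z).mp hzS
        have hln : l ≠ n := by rintro rfl; exact hzW (he ▸ hs)
        exact Or.inr ⟨l, by omega, he⟩
      · exact Or.inl ⟨hzW, hzS⟩
    · rintro (⟨hzW, _⟩ | ⟨l, hl, he⟩)
      · exact hzW
      · exact he ▸ hW l hl
  have hsub1 : (Finset.range n).image (fun j => g.next^[j] i) ⊆ SF := by
    intro z hz
    obtain ⟨l, hl, he⟩ := Finset.mem_image.mp hz
    have hl' := Finset.mem_range.mp hl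
    exact (hmem z).mpr ⟨l, by omega, he⟩
  have hdisj : Disjoint (Wᶜ \ SF) SF := Finset.sdiff_disjoint
  have hdisj1 : Disjoint (Wᶜ \ SF) ((Finset.range n).image (fun j => g.next^[j] i)) :=
    hdisj.mono_right hsub1
  have hcompl : (W.erase (g.next^[n] i))ᶜ = (Wᶜ \ SF) ∪ SF := by
    ext z
    simp only [Finset.mem_compl, Finset.mem_erase, Finset.mem_union, Finset.mem_sdiff,
      Finset.mem_compl, not_and]
    constructor
    · intro hzE
      by_cases hzn : z = g.next^[n] i
      · exact Or.inr ((hmem z).mpr ⟨n, le_refl n, hzn.symm⟩)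
      · by_cases hzS : z ∈ SF
        · exact Or.inr hzS
        · exact Or.inl ⟨hzE hzn, hzS⟩
    · rintro (⟨hzW, _⟩ | hzS)
      · exact fun _ => hzW
      · obtain ⟨l, hl, he⟩ := (hmem z).mp hzS
        intro hne hw
        rcases Nat.lt_or_ge l n with h | h
        · exact hW l h (he ▸ hw)
        · have : l = n := by omega
          exact hne (by rw [← he, this])
  have hoff : ∀ z ∈ Wᶜ \ SF,
      Ve s(z, rnext g i n (some b) z) - Vp z = Ve s(z, g.next z) - Vp z := by
    intro z hz
    rw [rnext_off g i n (some b)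
      (fun l hl he => (Finset.mem_sdiff.mp hz).2 ((hmem z).mpr ⟨l, hl, he⟩))]
  have hinj1 : ∀ a ∈ Finset.range n, ∀ c ∈ Finset.range n,
      g.next^[a] i = g.next^[c] i → a = c := by
    intro a ha c hc he
    exact iter_inj g hW (le_of_lt (Finset.mem_range.mp ha))
      (le_of_lt (Finset.mem_range.mp hc)) he
  have hinj0 : ∀ a ∈ Finset.range (n + 1), ∀ c ∈ Finset.range (n + 1),
      g.next^[a] i = g.next^[c] i → a = c := by
    intro a ha c hc he
    exact iter_inj g hW (Nat.lt_succ_iff.mp (Finset.mem_range.mp ha))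
      (Nat.lt_succ_iff.mp (Finset.mem_range.mp hc)) he
  have e1 : wcost Ve Vp (mergeG g i n b hW hs hadj hb) =
      (∑ z ∈ Wᶜ \ SF, (Ve s(z, g.next z) - Vp z)) +
        ((∑ j ∈ Finset.range n,
          (Ve s(g.next^[j] i, g.next^[j + 1] i) - Vp (g.next^[j + 1] i))) +
          (Ve s(i, b) - Vp i)) := by
    rw [wcost]
    simp only [mergeG_next]
    rw [hcompl, Finset.sum_union hdisj]
    congr 1
    · exact Finset.sum_congr rfl hoff
    · rw [hSFdef, Finset.sum_image hinj0, Finset.sum_range_succ']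
      congr 1
      · refine Finset.sum_congr rfl ?_
        intro j hj
        rw [rnext_path g i n (some b) hW (Finset.mem_range.mp hj), Sym2.eq_swap]
      · simp only [Function.iterate_zero_apply]
        rw [rnext_start g i n (some b) hW]
        rfl
  have e2 : wcost Ve Vp g =
      (∑ z ∈ Wᶜ \ SF, (Ve s(z, g.next z) - Vp z)) +
        ∑ j ∈ Finset.range n, (Ve s(g.next^[j] i, g.next^[j + 1] i) - Vp (g.next^[j] i)) := by
    rw [wcost]
    conv_lhs => rw [hWceq]
    rw [Finset.sum_union hdisj1]
    congr 1
    rw [Finset.sum_image hinj1]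
    refine Finset.sum_congr rfl ?_
    intro j hj
    rw [← Function.iterate_succ_apply' g.next j i]
  rw [e1, e2]
  have htel : ∑ j ∈ Finset.range n, (Vp (g.next^[j] i) - Vp (g.next^[j + 1] i)) =
      Vp (g.next^[0] i) - Vp (g.next^[n] i) :=
    Finset.sum_range_sub' (fun j => Vp (g.next^[j] i)) n
  have hre : ∑ j ∈ Finset.range n, (Ve s(g.next^[j] i, g.next^[j + 1] i) - Vp (g.next^[j + 1] i)) =
      ∑ j ∈ Finset.range n, ((Ve s(g.next^[j] i, g.next^[j + 1] i) - Vp (g.next^[j] i)) +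
        (Vp (g.next^[j] i) - Vp (g.next^[j + 1] i))) := by
    refine Finset.sum_congr rfl ?_
    intros; ring
  rw [hre, Finset.sum_add_distrib, htel]
  simp only [Function.iterate_zero_apply]
  ring

end Cost

end Aux

/-- under the genericness assumption the optimal values satisfy the
recurrence `V^{(k+1)} = V^{(k)} − max (V_{pq} − V_i)`, the maximum being taken over all
edges `(p, q)` (with `p ∉ W`, `q = next p`) of the optimal forest `T*_k` and all states
`i` lying in the part `t''` (not containing the sink) obtained by removing that edge,
i.e. all `i` from which the arrows of `g*_k` lead to `p`. -/

theorem optimal_value_recurrence {V : Type*} [Fintype V] [DecidableEq V]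
    (G : SimpleGraph V) (hG : G.Connected) (Ve : Sym2 V → ℝ) (Vp : V → ℝ)
    (hgen : Generic G Ve Vp) (k : ℕ) (hk : 1 ≤ k)
    (W : Finset V) (g : WGraph G W) (hopt : IsOptimalWGraph G Ve Vp k W g)
    (vk vk1 d : ℝ)
    (hvk : IsLeast {x : ℝ | ∃ (W' : Finset V) (g' : WGraph G W'),
        W'.card = k ∧ wcost Ve Vp g' = x} vk)
    (hvk1 : IsLeast {x : ℝ | ∃ (W' : Finset V) (g' : WGraph G W'),
        W'.card = k + 1 ∧ wcost Ve Vp g' = x} vk1)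
    (hd : IsGreatest {x : ℝ | ∃ p i : V, p ∉ W ∧ (∃ n : ℕ, g.next^[n] i = p) ∧
        x = Ve s(p, g.next p) - Vp i} d) :
    vk1 = vk - d := by
  classical
  obtain ⟨hcard, hopt2⟩ := hopt
  have hgv : wcost Ve Vp g = vk := by
    refine le_antisymm ?_ (hvk.2 ⟨W, g, hcard, rfl⟩)
    obtain ⟨W0, g0, hc0, hx0⟩ := hvk.1
    rw [← hx0]
    exact hopt2 W0 g0 hc0
  -- Direction 1 : `vk1 ≤ vk - d` via the splitting construction.
  obtain ⟨p, i0, hpW, ⟨n, hn⟩, hdval⟩ := hd.1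
  have hWn : ∀ j ≤ n, g.next^[j] i0 ∉ W := by
    intro j hj hmemW
    apply hpW
    rw [← hn]
    have hsplitn : n = (n - j) + j := by omega
    rw [hsplitn, Function.iterate_add_apply, sink_iter g hmemW (n - j)]
    exact hmemW
  have hi0W : i0 ∉ W := hWn 0 (by omega)
  have hcard1 : (insert i0 W).card = k + 1 := by
    rw [Finset.card_insert_of_notMem hi0W, hcard]
  have hup : vk1 ≤ vk - d := by
    have hmem1 : vk1 ≤ wcost Ve Vp (splitG g i0 n hWn) :=
      hvk1.2 ⟨insert i0 W, splitG g i0 n hWn, hcard1, rfl⟩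
    rw [wcost_splitG g i0 n Ve Vp hWn, hn, hgv, ← hdval] at hmem1
    exact hmem1
  -- Direction 2 : `vk ≤ vk1 + d` via the merging construction.
  obtain ⟨W1, g1, hc1, hcost1⟩ := hvk1.1
  have hw : ∃ w ∈ W1, w ∉ W := by
    by_contra h
    push_neg at h
    have hsub : W1 ⊆ W := h
    have := Finset.card_le_card hsub
    omega
  obtain ⟨w, hwW1, hwW⟩ := hw
  have hrW : g.next^[ghit g w] w ∈ W := ghit_spec g w
  have hk1 : 1 ≤ k := hk
  by_cases hall : ∀ j ≤ ghit g w, gsink g1 (g.next^[j] w) = w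
  · -- "apex" case : the whole `g`-trajectory of `w` lies in the `g1`-basin of `w`.
    exfalso
    have hrw : g.next^[ghit g w] w ≠ w := fun e => hwW (e ▸ hrW)
    -- swap the root of the `g`-component of `w` : sinks `insert w (W.erase r)`
    have hcardg : (insert w (W.erase (g.next^[ghit g w] w))).card = k := by
      have hwnm : w ∉ W.erase (g.next^[ghit g w] w) :=
        fun h => hwW (Finset.mem_of_mem_erase h)
      rw [Finset.card_insert_of_notMem hwnm, Finset.card_erase_of_mem hrW, hcard]
      omega
    have hswg : vk ≤ wcost Ve Vp (swapG g w (ghit g w) (fun j hj => ghit_min g hj) hrW) :=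
      hvk.2 ⟨_, swapG g w (ghit g w) (fun j hj => ghit_min g hj) hrW, hcardg, rfl⟩
    rw [wcost_swapG g w (ghit g w) Ve Vp hwW (fun j hj => ghit_min g hj) hrW, hgv] at hswg
    -- swap the root of the `g1`-component of `w` : sinks `insert r (W1.erase w)`
    have hrW1 : g.next^[ghit g w] w ∉ W1 := by
      intro hr1
      have h1 : gsink g1 (g.next^[ghit g w] w) = g.next^[ghit g w] w := gsink_of_mem g1 hr1
      have h2 : gsink g1 (g.next^[ghit g w] w) = w := hall (ghit g w) le_rfl
      exact hrw (by rw [← h1, h2])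
    have hsinkr : g1.next^[ghit g1 (g.next^[ghit g w] w)] (g.next^[ghit g w] w) = w :=
      hall (ghit g w) le_rfl
    have hs1 : g1.next^[ghit g1 (g.next^[ghit g w] w)] (g.next^[ghit g w] w) ∈ W1 :=
      ghit_spec g1 _
    have hcardg1 : (insert (g.next^[ghit g w] w)
        (W1.erase (g1.next^[ghit g1 (g.next^[ghit g w] w)] (g.next^[ghit g w] w)))).card
          = k + 1 := by
      rw [hsinkr]
      have hrnm : g.next^[ghit g w] w ∉ W1.erase w :=
        fun h => hrW1 (Finset.mem_of_mem_erase h)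
      rw [Finset.card_insert_of_notMem hrnm, Finset.card_erase_of_mem hwW1, hc1]
      omega
    have hswg1 : vk1 ≤ wcost Ve Vp (swapG g1 (g.next^[ghit g w] w) _
        (fun j hj => ghit_min g1 hj) hs1) :=
      hvk1.2 ⟨_, swapG g1 (g.next^[ghit g w] w) _ (fun j hj => ghit_min g1 hj) hs1,
        hcardg1, rfl⟩
    rw [wcost_swapG g1 (g.next^[ghit g w] w) _ Ve Vp hrW1 (fun j hj => ghit_min g1 hj) hs1,
      hsinkr, hcost1] at hswg1
    have heq : Vp (g.next^[ghit g w] w) = Vp w := le_antisymm (by linarith) (by linarith)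
    exact hrw (hgen.1 heq)
  · -- "crossing" case : the trajectory leaves the basin; merge along the crossing edge.
    push_neg at hall
    have hPex : ∃ j, j ≤ ghit g w ∧ gsink g1 (g.next^[j] w) ≠ w := hall
    have hj0m := (Nat.find_spec hPex).1
    have hj0ne := (Nat.find_spec hPex).2
    have hj0pos : Nat.find hPex ≠ 0 := by
      intro e
      apply hj0ne
      rw [e]
      exact gsink_of_mem g1 hwW1
    have haA : gsink g1 (g.next^[Nat.find hPex - 1] w) = w := by
      by_contra hne
      exact Nat.find_min hPex (show Nat.find hPex - 1 < Nat.find hPex by omega)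
        ⟨by omega, hne⟩
    have haW : g.next^[Nat.find hPex - 1] w ∉ W :=
      ghit_min g (show Nat.find hPex - 1 < ghit g w by omega)
    have hab : g.next (g.next^[Nat.find hPex - 1] w) = g.next^[Nat.find hPex] w := by
      rw [← Function.iterate_succ_apply' g.next (Nat.find hPex - 1) w]
      congr 1
      omega
    have hadj : G.Adj (g.next^[Nat.find hPex - 1] w) (g.next^[Nat.find hPex] w) :=
      hab ▸ g.adj_of_not_sink _ haW
    have hs1 : g1.next^[ghit g1 (g.next^[Nat.find hPex - 1] w)]
        (g.next^[Nat.find hPex - 1] w) ∈ W1 := ghit_spec g1 _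
    have hsinka : g1.next^[ghit g1 (g.next^[Nat.find hPex - 1] w)]
        (g.next^[Nat.find hPex - 1] w) = w := haA
    have hbne : gsink g1 (g.next^[Nat.find hPex] w) ≠
        g1.next^[ghit g1 (g.next^[Nat.find hPex - 1] w)] (g.next^[Nat.find hPex - 1] w) := by
      rw [hsinka]
      exact hj0ne
    have hcardm : (W1.erase (g1.next^[ghit g1 (g.next^[Nat.find hPex - 1] w)]
        (g.next^[Nat.find hPex - 1] w))).card = k := by
      rw [hsinka, Finset.card_erase_of_mem hwW1, hc1]
      omega
    have hmrg : vk ≤ wcost Ve Vp (mergeG g1 (g.next^[Nat.find hPex - 1] w) _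
        (g.next^[Nat.find hPex] w) (fun j hj => ghit_min g1 hj) hs1 hadj hbne) :=
      hvk.2 ⟨_, mergeG g1 (g.next^[Nat.find hPex - 1] w) _ (g.next^[Nat.find hPex] w)
        (fun j hj => ghit_min g1 hj) hs1 hadj hbne, hcardm, rfl⟩
    rw [wcost_mergeG g1 (g.next^[Nat.find hPex - 1] w) _ Ve Vp (g.next^[Nat.find hPex] w)
      (fun j hj => ghit_min g1 hj) hs1 hadj hbne, hsinka, hcost1] at hmrg
    have hdb : Ve s(g.next^[Nat.find hPex - 1] w, g.next^[Nat.find hPex] w) - Vp w ≤ d := by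
      refine hd.2 ⟨g.next^[Nat.find hPex - 1] w, w, haW, ⟨Nat.find hPex - 1, rfl⟩, ?_⟩
      rw [hab]
    linarith
end

section
/- The state of globally minimal potential is a sink of every optimal W-graph: under the genericness assumption, s*_1 = argmin_{i∈S} V_i belongs to the sink set W*_k of the optimal W-graph g*_k for every k = 1, ..., n. -/
open Finset

/-- the state of globally minimal potential is a sink of every optimal
`W`-graph. -/
theorem global_min_is_sink_of_optimal {V : Type*} [Fintype V] [DecidableEq V]
    (G : SimpleGraph V) (hG : G.Connected) (Ve : Sym2 V → ℝ) (Vp : V → ℝ)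
    (hgen : Generic G Ve Vp) (k : ℕ) (hk : 1 ≤ k)
    (W : Finset V) (g : WGraph G W) (hopt : IsOptimalWGraph G Ve Vp k W g)
    (s : V) (hs : ∀ i : V, Vp s ≤ Vp i) :
    s ∈ W := by
  classical
  by_contra hsW
  obtain ⟨hWk, hmin⟩ := hopt
  have habs := g.absorbed s
  set p : ℕ → V := fun t => g.next^[t] s with hpdef
  have hps : p 0 = s := rfl
  have hpsucc : ∀ t, p (t + 1) = g.next (p t) := fun t =>
    Function.iterate_succ_apply' g.next t s
  set N := Nat.find habs with hNdef
  have hwW : p N ∈ W := Nat.find_spec habs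
  have hnot : ∀ t, t < N → p t ∉ W := fun t ht => Nat.find_min habs ht
  have hN0 : 0 < N := by
    rcases Nat.eq_zero_or_pos N with h | h
    · exact absurd (by simpa [h, hps] using hwW) hsW
    · exact h
  have hshift : ∀ a m, p (a + m) = g.next^[m] (p a) := by
    intro a m
    show g.next^[a + m] s = g.next^[m] (g.next^[a] s)
    rw [Nat.add_comm]
    exact Function.iterate_add_apply _ _ _ _
  have hinj : ∀ a, a ≤ N → ∀ b, b ≤ N → p a = p b → a = b := by
    have key : ∀ a b, a < b → b ≤ N → p a ≠ p b := by
      intro a b hab hbN heq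
      have h1 : p (a + (N - b)) = p N := by
        rw [hshift a (N - b), heq, ← hshift b (N - b), Nat.add_sub_cancel' hbN]
      have hlt : a + (N - b) < N := by omega
      exact hnot _ hlt (h1 ▸ hwW)
    intro a ha b hb hab
    rcases lt_trichotomy a b with h | h | h
    · exact absurd hab (key a b h hb)
    · exact h
    · exact absurd hab.symm (key b a h ha)
  set next' : V → V := fun i =>
    if h : ∃ t, t ≤ N ∧ p t = i then p (h.choose - 1) else g.next i with hn'def
  have hnext'_p : ∀ t, t ≤ N → next' (p t) = p (t - 1) := by
    intro t ht
    have h : ∃ u, u ≤ N ∧ p u = p t := ⟨t, ht, rfl⟩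
    have : next' (p t) = p (h.choose - 1) := dif_pos h
    rw [this, hinj _ h.choose_spec.1 _ ht h.choose_spec.2]
  have hnext'_off : ∀ i, (∀ t, t ≤ N → p t ≠ i) → next' i = g.next i := by
    intro i hi
    have h : ¬∃ t, t ≤ N ∧ p t = i := by rintro ⟨t, ht, he⟩; exact hi t ht he
    exact dif_neg h
  set w := p N with hwdef
  have hsw : s ≠ w := fun h => hsW (h ▸ hwW)
  set W' : Finset V := insert s (W.erase w) with hW'def
  have hsinW' : s ∈ W' := mem_insert_self _ _
  have hmemW' : ∀ i, i ∈ W' ↔ i = s ∨ (i ∈ W ∧ i ≠ w) := by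
    intro i; simp [hW'def, mem_insert, mem_erase, and_comm]
  have hW'card : W'.card = k := by
    rw [hW'def, card_insert_of_notMem (fun h => hsW (mem_of_mem_erase h)),
      card_erase_of_mem hwW, hWk]
    omega
  -- the reversed W-graph
  have hadj : ∀ i ∉ W', G.Adj i (next' i) := by
    intro i hi
    by_cases hpath : ∃ t, t ≤ N ∧ p t = i
    · obtain ⟨t, ht, rfl⟩ := hpath
      have ht0 : t ≠ 0 := by
        rintro rfl
        exact hi (by simpa [hps] using hsinW')
      obtain ⟨u, rfl⟩ := Nat.exists_eq_succ_of_ne_zero ht0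
      rw [hnext'_p _ ht, Nat.succ_sub_one]
      have huN : u < N := lt_of_lt_of_le (Nat.lt_succ_self u) ht
      have hadju := g.adj_of_not_sink (p u) (hnot u huN)
      rw [← hpsucc u] at hadju
      exact hadju.symm
    · have hiW : i ∉ W := by
        intro hiW
        have hiw : i = w := by
          by_contra hne
          exact hi ((hmemW' i).mpr (Or.inr ⟨hiW, hne⟩))
        exact hpath ⟨N, le_rfl, by rw [← hwdef, hiw]⟩
      rw [hnext'_off i (fun t ht he => hpath ⟨t, ht, he⟩)]
      exact g.adj_of_not_sink i hiW
  have hfix : ∀ i ∈ W', next' i = i := by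
    intro i hi
    rcases (hmemW' i).mp hi with rfl | ⟨hiW, hne⟩
    · have h0 := hnext'_p 0 (Nat.zero_le N)
      simpa [hps] using h0
    · rw [hnext'_off i]
      · exact g.sink_fixed i hiW
      · intro t ht he
        rcases Nat.lt_or_ge t N with h | h
        · exact hnot t h (he ▸ hiW)
        · have htN : t = N := le_antisymm ht h
          exact hne (by rw [← he, htN, hwdef])
  have hpath_abs : ∀ t, t ≤ N → next'^[t] (p t) = s := by
    intro t
    induction t with
    | zero => intro _; simpa using hps
    | succ u ih =>
      intro h
      rw [Function.iterate_succ_apply, hnext'_p _ h, Nat.succ_sub_one]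
      exact ih (Nat.le_of_succ_le h)
  have habsorbed : ∀ m (i : V), g.next^[m] i ∈ W → ∃ n, next'^[n] i ∈ W' := by
    intro m
    induction m using Nat.strong_induction_on with
    | _ m ih =>
      intro i hi
      by_cases hpath : ∃ t, t ≤ N ∧ p t = i
      · obtain ⟨t, ht, rfl⟩ := hpath
        exact ⟨t, by rw [hpath_abs t ht]; exact hsinW'⟩
      · by_cases hiW : i ∈ W
        · refine ⟨0, ?_⟩
          simp only [Function.iterate_zero_apply]
          refine (hmemW' i).mpr (Or.inr ⟨hiW, ?_⟩)
          intro h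
          exact hpath ⟨N, le_rfl, by rw [← hwdef, h]⟩
        · have hm0 : m ≠ 0 := by
            rintro rfl
            exact hiW (by simpa using hi)
          obtain ⟨u, rfl⟩ := Nat.exists_eq_succ_of_ne_zero hm0
          have hi' : g.next^[u] (g.next i) ∈ W := by
            rwa [← Function.iterate_succ_apply]
          obtain ⟨n, hn⟩ := ih u (Nat.lt_succ_self u) (g.next i) hi'
          refine ⟨n + 1, ?_⟩
          rw [Function.iterate_succ_apply,
            hnext'_off i (fun t ht he => hpath ⟨t, ht, he⟩)]
          exact hn
  let g' : WGraph G W' :=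
    ⟨next', hadj, hfix, fun i => (g.absorbed i).elim (fun m hm => habsorbed m i hm)⟩
  -- cost comparison
  set Q : Finset V := (range (N + 1)).image p with hQdef
  have hsQ : s ∈ Q := mem_image.mpr ⟨0, mem_range.mpr (by omega), hps⟩
  have hwQ : w ∈ Q := mem_image.mpr ⟨N, mem_range.mpr (by omega), hwdef.symm⟩
  have hWQ : Wᶜ ∩ Q = (range N).image p := by
    ext i
    simp only [mem_inter, mem_compl, mem_image, mem_range, hQdef]
    constructor
    · rintro ⟨hiW, t, ht, rfl⟩
      refine ⟨t, ?_, rfl⟩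
      rcases Nat.lt_or_ge t N with h | h
      · exact h
      · have : t = N := by omega
        exact absurd (this ▸ hwW) hiW
    · rintro ⟨t, ht, rfl⟩
      exact ⟨hnot t ht, t, by omega, rfl⟩
  have hW'Q : W'ᶜ ∩ Q = (range N).image (fun t => p (t + 1)) := by
    ext i
    simp only [mem_inter, mem_compl, mem_image, mem_range, hQdef]
    constructor
    · rintro ⟨hiW', t, ht, rfl⟩
      have ht0 : t ≠ 0 := by
        rintro rfl
        exact hiW' (by simpa [hps] using hsinW')
      obtain ⟨u, rfl⟩ := Nat.exists_eq_succ_of_ne_zero ht0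
      exact ⟨u, by omega, rfl⟩
    · rintro ⟨t, ht, rfl⟩
      refine ⟨?_, t + 1, by omega, rfl⟩
      intro h
      rcases (hmemW' _).mp h with he | ⟨hiW, hne⟩
      · exact Nat.succ_ne_zero t
          (hinj _ (by omega) _ (Nat.zero_le N) (by rw [he, hps]))
      · rcases Nat.lt_or_ge (t + 1) N with h' | h'
        · exact hnot _ h' hiW
        · exact hne (by rw [hwdef]; exact congrArg p (by omega))
  have hdiff : Wᶜ \ Q = W'ᶜ \ Q := by
    ext i
    simp only [mem_sdiff, mem_compl]
    constructor
    · rintro ⟨hiW, hiQ⟩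
      refine ⟨fun h => ?_, hiQ⟩
      rcases (hmemW' i).mp h with rfl | ⟨hiW', _⟩
      · exact hiQ hsQ
      · exact hiW hiW'
    · rintro ⟨hiW', hiQ⟩
      refine ⟨fun hiW => ?_, hiQ⟩
      by_cases h : i = w
      · exact hiQ (h ▸ hwQ)
      · exact hiW' ((hmemW' i).mpr (Or.inr ⟨hiW, h⟩))
  have hoffQ : ∀ i ∈ Wᶜ \ Q, Ve s(i, next' i) - Vp i = Ve s(i, g.next i) - Vp i := by
    intro i hiQ
    rw [hnext'_off i]
    intro t ht he
    exact (mem_sdiff.mp hiQ).2 (mem_image.mpr ⟨t, mem_range.mpr (by omega), he⟩)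
  have hinjrange : ∀ x ∈ range N, ∀ y ∈ range N, p x = p y → x = y := by
    intro x hx y hy
    exact hinj x (by have := mem_range.mp hx; omega) y (by have := mem_range.mp hy; omega)
  have hinjrange' : ∀ x ∈ range N, ∀ y ∈ range N, p (x + 1) = p (y + 1) → x = y := by
    intro x hx y hy h
    have := hinj (x + 1) (by have := mem_range.mp hx; omega) (y + 1)
      (by have := mem_range.mp hy; omega) h
    omega
  have e1 : wcost Ve Vp g =
      ∑ i ∈ Wᶜ \ Q, (Ve s(i, g.next i) - Vp i) +
        ∑ t ∈ range N, (Ve s(p t, p (t + 1)) - Vp (p t)) := by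
    rw [wcost, ← Finset.sum_inter_add_sum_sdiff Wᶜ Q (fun i => Ve s(i, g.next i) - Vp i),
      hWQ, Finset.sum_image hinjrange, add_comm]
    congr 1
    refine Finset.sum_congr rfl fun t _ => ?_
    rw [hpsucc t]
  have e2 : wcost Ve Vp g' =
      ∑ i ∈ Wᶜ \ Q, (Ve s(i, g.next i) - Vp i) +
        ∑ t ∈ range N, (Ve s(p t, p (t + 1)) - Vp (p (t + 1))) := by
    rw [wcost, ← Finset.sum_inter_add_sum_sdiff W'ᶜ Q (fun i => Ve s(i, g'.next i) - Vp i),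
      hW'Q, Finset.sum_image hinjrange', add_comm, ← hdiff]
    congr 1
    · exact Finset.sum_congr rfl fun i hi => hoffQ i hi
    · refine Finset.sum_congr rfl fun t ht => ?_
      have hle : t + 1 ≤ N := by have := mem_range.mp ht; omega
      show Ve s(p (t + 1), next' (p (t + 1))) - Vp (p (t + 1)) = _
      rw [hnext'_p _ hle, Nat.succ_sub_one, Sym2.eq_swap]
  have hkey : wcost Ve Vp g' - wcost Ve Vp g = Vp s - Vp w := by
    rw [e1, e2, hwdef]
    have htel : ∑ t ∈ range N, (Vp (p t) - Vp (p (t + 1))) = Vp (p 0) - Vp (p N) :=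
      Finset.sum_range_sub' (fun t => Vp (p t)) N
    rw [hps] at htel
    have hab : ∀ A S1 S2 : ℝ, A + S2 - (A + S1) = S2 - S1 := fun _ _ _ => by ring
    rw [hab, ← Finset.sum_sub_distrib, ← htel]
    exact Finset.sum_congr rfl fun t _ => by ring
  have hle := hmin W' g' hW'card
  have h1 : Vp w ≤ Vp s := by linarith
  have h2 : Vp w = Vp s := le_antisymm h1 (hs w)
  exact hsw (hgen.1 h2).symm
end
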